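/- arXiv:2603.21068 — 9 statements merged into one kernel-verified Lean document; each statement's English description precedes it below -/
import Mathlib

section
/- Generalized Supercode Lemma: Let q be a prime power, n a positive integer, and let C ⊆ C' ⊆ F_q^n be F_q-linear codes (F_q-subspaces). Let r ≥ 1 be an integer such that dim_{F_q}(C') − dim_{F_q}(C) ≥ r. Then ρ_r(C) ≥ d_r(C'); that is, there exist vectors v_1, …, v_r ∈ F_q^n such that for every choice of codewords c_1, …, c_r ∈ C, the union of the supports of v_1 − c_1, …, v_r − c_r has cardinality at least d_r(C'). -/
/-- The support of a vector `v ∈ F^n` : the set of coordinate positions where `v` is nonzero. -/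
def vecSupp {F : Type*} [Field F] [DecidableEq F] {n : ℕ} (v : Fin n → F) : Finset (Fin n) :=
  Finset.univ.filter fun i => v i ≠ 0

/-- The support of a subspace `D ⊆ F^n` : the union of the supports of its elements. -/
def codeSupp {F : Type*} [Field F] {n : ℕ} (D : Submodule F (Fin n → F)) : Set (Fin n) :=
  {i | ∃ v ∈ D, v i ≠ 0}

/-- The `r`-th generalized Hamming weight of a linear code `C ⊆ F^n` : the minimum support
size of an `r`-dimensional subcode of `C`. -/
noncomputable def ghw {F : Type*} [Field F] {n : ℕ} (C : Submodule F (Fin n → F)) (r : ℕ) : ℕ :=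
  sInf {s | ∃ D : Submodule F (Fin n → F),
    D ≤ C ∧ Module.finrank F ↥D = r ∧ (codeSupp D).ncard = s}

/-! Lift `r` vectors of `C'` whose classes modulo `C` are linearly independent. Subtracting
codewords of `C` does not change those classes, so for every choice of `c_i ∈ C` the vectors
`v_i - c_i` span an `r`-dimensional subcode of `C'`, whose support is at least `d_r(C')` and lies
in the union of the supports of the `v_i - c_i`. -/

open Module

section Quotient

variable {K V : Type*} [DivisionRing K] [AddCommGroup V] [Module K V]

theorem Submodule.finrank_map_mkQ_add_finrank {C C' : Submodule K V} [FiniteDimensional K C']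
    (hsub : C ≤ C') : finrank K (C'.map C.mkQ) + finrank K C = finrank K C' := by
  have h := LinearMap.finrank_range_add_finrank_ker (C.mkQ.comp C'.subtype)
  rwa [LinearMap.range_comp, Submodule.range_subtype, LinearMap.ker_comp, Submodule.ker_mkQ,
    (Submodule.comapSubtypeEquivOfLe hsub).finrank_eq] at h

theorem Submodule.exists_linearIndependent_mkQ_comp {C C' : Submodule K V}
    [FiniteDimensional K C'] (hsub : C ≤ C') {r : ℕ}
    (hdim : finrank K C + r ≤ finrank K C') :
    ∃ v : Fin r → V, (∀ i, v i ∈ C') ∧ LinearIndependent K (C.mkQ ∘ v) := by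
  have hr : r ≤ finrank K (C'.map C.mkQ) := by
    have := Submodule.finrank_map_mkQ_add_finrank hsub
    omega
  obtain ⟨f, hf⟩ := exists_linearIndependent_of_le_finrank hr
  choose v hvC' hvf using fun i => Submodule.mem_map.1 (f i).2
  refine ⟨v, hvC', ?_⟩
  have hcomp : C.mkQ ∘ v = (C'.map C.mkQ).subtype ∘ f := funext hvf
  exact hcomp ▸ hf.map' _ (Submodule.ker_subtype _)

end Quotient

theorem LinearIndependent.sub_of_mkQ_comp {R M ι : Type*} [Ring R] [AddCommGroup M] [Module R M]
    {C : Submodule R M} {v c : ι → M} (hv : LinearIndependent R (C.mkQ ∘ v))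
    (hc : ∀ i, c i ∈ C) : LinearIndependent R (v - c) := by
  refine LinearIndependent.of_comp C.mkQ ?_
  convert hv using 1
  funext i
  simp [(Submodule.Quotient.mk_eq_zero C).mpr (hc i)]

section Support

variable {F : Type*} [Field F] {n : ℕ}

theorem codeSupp_span_range_subset [DecidableEq F] {ι : Type*} [Fintype ι]
    (v : ι → Fin n → F) :
    codeSupp (Submodule.span F (Set.range v)) ⊆ ↑(Finset.univ.biUnion fun i => vecSupp (v i)) := by
  rintro j ⟨w, hw, hwj⟩
  by_contra hj
  simp only [Finset.coe_biUnion, Set.mem_iUnion, Finset.mem_coe, vecSupp, Finset.mem_filter,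
    Finset.mem_univ, true_and, Finset.coe_univ, Set.mem_univ, exists_true_left, not_exists,
    not_not] at hj
  have hker : Submodule.span F (Set.range v) ≤ LinearMap.ker (LinearMap.proj j) :=
    Submodule.span_le.2 (Set.range_subset_iff.2 hj)
  exact hwj (hker hw)

theorem ghw_le_ncard_codeSupp {C D : Submodule F (Fin n → F)} (hD : D ≤ C) :
    ghw C (finrank F D) ≤ (codeSupp D).ncard :=
  Nat.sInf_le ⟨D, hD, rfl, rfl⟩

end Support

theorem generalized_supercode_lemma_general {F : Type*} [Field F] [DecidableEq F]
    {n : ℕ}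
    (C C' : Submodule F (Fin n → F)) (hsub : C ≤ C')
    (r : ℕ)
    (hdim : Module.finrank F ↥C + r ≤ Module.finrank F ↥C') :
    ∃ v : Fin r → (Fin n → F),
      ∀ c : Fin r → (Fin n → F), (∀ i, c i ∈ C) →
        ghw C' r ≤ (Finset.univ.biUnion fun i => vecSupp (v i - c i)).card := by
  obtain ⟨v, hvC', hv⟩ := Submodule.exists_linearIndependent_mkQ_comp hsub hdim
  refine ⟨v, fun c hc => ?_⟩
  set D := Submodule.span F (Set.range (v - c))
  have hDC' : D ≤ C' :=
    Submodule.span_le.2 (Set.range_subset_iff.2 fun i => C'.sub_mem (hvC' i) (hsub (hc i)))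
  have hDr : finrank F D = r := by
    rw [finrank_span_eq_card (hv.sub_of_mkQ_comp hc), Fintype.card_fin]
  calc ghw C' r ≤ (codeSupp D).ncard := hDr ▸ ghw_le_ncard_codeSupp hDC'
    _ ≤ _ := by
      rw [← Set.ncard_coe_finset]
      exact Set.ncard_le_ncard (codeSupp_span_range_subset (v - c)) (Finset.finite_toSet _)

/-- **The Generalized Supercode Lemma.** If `C ⊆ C' ⊆ F_q^n` are linear codes with
`dim C' − dim C ≥ r` (for `r ≥ 1`), then `ρ_r(C) ≥ d_r(C')`: there exist vectors
`v_1, …, v_r ∈ F_q^n` such that for every choice of codewords `c_1, …, c_r ∈ C`, the union of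
the supports of `v_i − c_i` has cardinality at least `d_r(C')`. -/
theorem generalized_supercode_lemma {F : Type*} [Field F] [Fintype F] [DecidableEq F]
    {n : ℕ} (hn : 0 < n)
    (C C' : Submodule F (Fin n → F)) (hsub : C ≤ C')
    (r : ℕ) (hr : 1 ≤ r)
    (hdim : Module.finrank F ↥C + r ≤ Module.finrank F ↥C') :
    ∃ v : Fin r → (Fin n → F),
      ∀ c : Fin r → (Fin n → F), (∀ i, c i ∈ C) →
        ghw C' r ≤ (Finset.univ.biUnion fun i => vecSupp (v i - c i)).card :=
  generalized_supercode_lemma_general C C' hsub r hdim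
end

section
/- For every integer m ≥ 4 there exist vectors u_1, u_2 ∈ F_{2^m}² such that for all x_1, x_2, x_3, x_4 ∈ F_{2^m}, at least one of u_1, u_2 does not lie in the F_2-linear span of {(x_1, x_1³), (x_2, x_2³), (x_3, x_3³), (x_4, x_4³)} inside F_{2^m}². (Equivalently, the second generalized covering radius of the binary primitive double-error-correcting BCH code satisfies ρ_2(BCH(2,m)) ≥ 5.) -/
/-!
Take `u₁ = (0, 1)` and `u₂ = (0, c)` with `c ∉ {0, 1}`. Over `𝔽₂` a vector lies in the span of
the `(x, x³)`, `x ∈ s`, exactly when it is `(∑ T x, ∑ T x³)` for some `T ⊆ s`. A zero-sum set with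
at most two elements is `∅` or `{0}`, so both `T₁` and `T₂` would need at least three elements.
Inside a four-element `s` their symmetric difference then has at most two elements and, in
characteristic two, zero sum; hence its cube sum `1 + c` vanishes, contradicting `c ≠ 1`.
-/

open scoped symmDiff

namespace Finset

variable {α R : Type*} [DecidableEq α] [Ring R] [CharP R 2]

theorem sum_symmDiff_of_charTwo (s t : Finset α) (f : α → R) :
    ∑ x ∈ s ∆ t, f x = ∑ x ∈ s, f x + ∑ x ∈ t, f x := by
  have hsdiff : ∑ x ∈ s ∆ t, f x + ∑ x ∈ s ∩ t, f x = ∑ x ∈ s ∪ t, f x := by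
    rw [symmDiff_eq_sup_sdiff_inf]
    exact sum_sdiff inter_subset_union
  rw [← sum_union_inter, ← hsdiff, add_assoc, CharTwo.add_self_eq_zero, add_zero]

theorem card_symmDiff (s t : Finset α) : #(s ∆ t) = #(s ∪ t) - #(s ∩ t) := by
  rw [symmDiff_eq_sup_sdiff_inf]
  exact card_sdiff_of_subset inter_subset_union

theorem subset_singleton_zero_of_sum_eq_zero {T : Finset R} (hT : #T ≤ 2)
    (hsum : ∑ x ∈ T, x = 0) : T ⊆ {0} := by
  classical
  interval_cases hcard : #T
  · simp [card_eq_zero.mp hcard]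
  · obtain ⟨a, rfl⟩ := card_eq_one.mp hcard
    simpa using hsum
  · obtain ⟨a, b, hab, hT⟩ := card_eq_two.mp hcard
    subst hT
    rw [sum_pair hab, add_eq_zero_iff_eq_neg, CharTwo.neg_eq] at hsum
    exact absurd hsum hab

theorem sum_eq_zero_of_card_le_two {T : Finset R} (hT : #T ≤ 2) (hsum : ∑ x ∈ T, x = 0)
    (f : R → R) (hf : f 0 = 0) : ∑ x ∈ T, f x = 0 :=
  sum_eq_zero fun x hx => by
    rw [mem_singleton.mp (subset_singleton_zero_of_sum_eq_zero hT hsum hx), hf]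

theorem sum_eq_sum_of_sum_eq_zero_of_card_le_four {s T₁ T₂ : Finset R} (hs : #s ≤ 4)
    (hT₁ : T₁ ⊆ s) (hT₂ : T₂ ⊆ s)
    (hsum₁ : ∑ x ∈ T₁, x = 0) (hsum₂ : ∑ x ∈ T₂, x = 0) (f : R → R) (hf : f 0 = 0)
    (hf₁ : ∑ x ∈ T₁, f x ≠ 0) (hf₂ : ∑ x ∈ T₂, f x ≠ 0) :
    ∑ x ∈ T₁, f x = ∑ x ∈ T₂, f x := by
  classical
  have three_le_card {T : Finset R} (hsum : ∑ x ∈ T, x = 0) (hfT : ∑ x ∈ T, f x ≠ 0) :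
      3 ≤ #T := by
    by_contra! hT
    exact hfT (sum_eq_zero_of_card_le_two (by omega) hsum f hf)
  have hunion : #(T₁ ∪ T₂) ≤ 4 := (card_le_card (union_subset hT₁ hT₂)).trans hs
  have hsymmDiff : #(T₁ ∆ T₂) ≤ 2 := by
    have := card_union_add_card_inter T₁ T₂
    have := three_le_card hsum₁ hf₁
    have := three_le_card hsum₂ hf₂
    rw [card_symmDiff]
    omega
  have hzero := sum_eq_zero_of_card_le_two hsymmDiff
    (by rw [sum_symmDiff_of_charTwo, hsum₁, hsum₂, add_zero]) f hf
  rwa [sum_symmDiff_of_charTwo, add_eq_zero_iff_eq_neg, CharTwo.neg_eq] at hzero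

end Finset

open Finset

theorem mem_span_finset_zmod_two_iff {M : Type*} [AddCommGroup M] [Module (ZMod 2) M]
    {s : Finset M} {u : M} :
    u ∈ Submodule.span (ZMod 2) (s : Set M) ↔ ∃ T ⊆ s, ∑ x ∈ T, x = u := by
  classical
  constructor
  · intro hu
    obtain ⟨g, -, rfl⟩ := Submodule.mem_span_finset.mp hu
    refine ⟨s.filter (g · = 1), filter_subset _ _, ?_⟩
    rw [sum_filter]
    refine sum_congr rfl fun x _ => ?_
    rcases (by decide : ∀ a : ZMod 2, a = 0 ∨ a = 1) (g x) with h | h <;> simp [h]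
  · rintro ⟨T, hT, rfl⟩
    exact Submodule.sum_mem _ fun x hx => Submodule.subset_span (hT hx)

theorem mem_span_graph_zmod_two_iff {M N : Type*} [AddCommGroup M] [Module (ZMod 2) M]
    [AddCommGroup N] [Module (ZMod 2) N] (g : M → N) (s : Finset M) (a : M) (b : N) :
    (a, b) ∈ Submodule.span (ZMod 2) ((fun x => (x, g x)) '' (s : Set M)) ↔
      ∃ T ⊆ s, ∑ x ∈ T, x = a ∧ ∑ x ∈ T, g x = b := by
  classical
  have hinj : Function.Injective fun x => (x, g x) := fun x y h => congrArg Prod.fst h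
  rw [← coe_image, mem_span_finset_zmod_two_iff]
  constructor
  · rintro ⟨T, hT, hsum⟩
    obtain ⟨T', hT', rfl⟩ := subset_image_iff.mp hT
    rw [sum_image hinj.injOn, Prod.ext_iff, Prod.fst_sum, Prod.snd_sum] at hsum
    exact ⟨T', hT', hsum⟩
  · rintro ⟨T, hT, hsum⟩
    refine ⟨T.image _, image_subset_image hT, ?_⟩
    rw [sum_image hinj.injOn, Prod.ext_iff, Prod.fst_sum, Prod.snd_sum]
    exact hsum

theorem exists_ne_zero_ne_one_of_two_lt_card {R : Type*} [Zero R] [One R] [Fintype R]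
    (h : 2 < Fintype.card R) : ∃ c : R, c ≠ 0 ∧ c ≠ 1 := by
  classical
  obtain ⟨c, -, hc⟩ := exists_mem_notMem_of_card_lt_card (s := {0, 1}) (t := univ)
    (card_le_two.trans_lt h)
  simp only [mem_insert, mem_singleton, not_or] at hc
  exact ⟨c, hc⟩

/-- For every `m ≥ 4` there exist `u₁, u₂ ∈ F_{2^m}²` such that for all
`x₁, x₂, x₃, x₄ ∈ F_{2^m}`, at least one of `u₁, u₂` is not in the `F_2`-span of
`{(x_j, x_j³) : 1 ≤ j ≤ 4}`. Equivalently, `ρ₂(BCH(2,m)) ≥ 5`. -/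
theorem rho_two_BCH_two_ge_five (m : ℕ) (hm : 4 ≤ m) :
    ∃ u₁ u₂ : GaloisField 2 m × GaloisField 2 m,
      ∀ x₁ x₂ x₃ x₄ : GaloisField 2 m,
        u₁ ∉ Submodule.span (ZMod 2)
            ((fun x : GaloisField 2 m => (x, x ^ 3)) '' {x₁, x₂, x₃, x₄}) ∨
        u₂ ∉ Submodule.span (ZMod 2)
            ((fun x : GaloisField 2 m => (x, x ^ 3)) '' {x₁, x₂, x₃, x₄}) := by
  classical
  let _ : Fintype (GaloisField 2 m) := Fintype.ofFinite _
  obtain ⟨c, hc0, hc1⟩ : ∃ c : GaloisField 2 m, c ≠ 0 ∧ c ≠ 1 := by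
    apply exists_ne_zero_ne_one_of_two_lt_card
    rw [← Nat.card_eq_fintype_card, GaloisField.card 2 m (by omega)]
    calc 2 < 2 ^ 4 := by norm_num
      _ ≤ 2 ^ m := Nat.pow_le_pow_right two_pos hm
  refine ⟨(0, 1), (0, c), fun x₁ x₂ x₃ x₄ => ?_⟩
  set s : Finset (GaloisField 2 m) := {x₁, x₂, x₃, x₄}
  have hs : ({x₁, x₂, x₃, x₄} : Set (GaloisField 2 m)) = s := by simp [s]
  rw [hs, or_iff_not_and_not, not_not, not_not, mem_span_graph_zmod_two_iff,
    mem_span_graph_zmod_two_iff]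
  rintro ⟨⟨T₁, hT₁, hsum₁, hcube₁⟩, ⟨T₂, hT₂, hsum₂, hcube₂⟩⟩
  have hcube := sum_eq_sum_of_sum_eq_zero_of_card_le_four card_le_four hT₁ hT₂ hsum₁ hsum₂
    (· ^ 3) (zero_pow three_ne_zero) (hcube₁ ▸ one_ne_zero) (hcube₂ ▸ hc0)
  exact hc1 (hcube₂ ▸ hcube₁ ▸ hcube).symm
end

section
/- For every integer m ≥ 3 there exist vectors u_1, u_2, u_3 ∈ F_{2^m}² such that for all x_1, x_2, x_3, x_4, x_5 ∈ F_{2^m}, at least one of u_1, u_2, u_3 does not lie in the F_2-linear span of {(x_j, x_j³) : 1 ≤ j ≤ 5} inside F_{2^m}². (Equivalently, the third generalized covering radius satisfies ρ_3(BCH(2,m)) ≥ 6.) -/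
/-!
Let `L` and `M` send `c ∈ F₂⁵` to `∑ cⱼ xⱼ` and `∑ cⱼ xⱼ³`. A vector `(0, w)` lies in the span of
the `(xⱼ, xⱼ³)` iff `w ∈ M (ker L)`, so it suffices that this space has dimension at most `2`
while `F_{2^m}` contains three independent vectors. If the `xⱼ` span a space of dimension at
least `3`, then `ker L` has dimension at most `2`. Otherwise all `xⱼ` lie in some `span {a, b}`;
there `x ↦ x³` is additive modulo `span {a b (a + b)}`, since in characteristic `2`
`(x + y)³ - x³ - y³ = x y (x + y)`, so `M (ker L) ≤ span {a b (a + b)}`.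
-/

open Module Submodule

theorem ZMod.eq_zero_or_eq_one (c : ZMod 2) : c = 0 ∨ c = 1 := by
  revert c
  decide

theorem Submodule.exists_span_le_span_pair {K M : Type*} [DivisionRing K] [AddCommGroup M]
    [Module K M] {s : Set M} [FiniteDimensional K (span K s)] (hs : finrank K (span K s) ≤ 2) :
    ∃ a b : M, span K s ≤ span K {a, b} := by
  classical
  obtain ⟨t, -, ht, hspan, -⟩ := exists_finset_span_eq_linearIndepOn K s
  rw [← hspan]
  have ht2 : t.card ≤ 2 := ht ▸ hs
  interval_cases h : t.card
  · exact ⟨0, 0, by simp [Finset.card_eq_zero.mp h]⟩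
  · obtain ⟨a, rfl⟩ := Finset.card_eq_one.mp h
    exact ⟨a, a, by simp⟩
  · obtain ⟨a, b, -, rfl⟩ := Finset.card_eq_two.mp h
    exact ⟨a, b, by simp⟩

theorem AddSubgroup.apply_sum_sub_sum_apply_mem {ι G H : Type*} [AddCommGroup G]
    [AddCommGroup H] {V : AddSubgroup G} {W : AddSubgroup H} {f : G → H} (h0 : f 0 ∈ W)
    (hadd : ∀ x ∈ V, ∀ y ∈ V, f (x + y) - f x - f y ∈ W) {y : ι → G} (s : Finset ι)
    (hy : ∀ j ∈ s, y j ∈ V) : f (∑ j ∈ s, y j) - ∑ j ∈ s, f (y j) ∈ W := by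
  classical
  induction s using Finset.induction_on with
  | empty => simpa using h0
  | insert i s hi ih =>
    rw [Finset.sum_insert hi, Finset.sum_insert hi]
    have hs := ih fun j hj => hy j (Finset.mem_insert_of_mem hj)
    have hi' := hadd _ (hy i (Finset.mem_insert_self i s)) _
      (V.sum_mem fun j hj => hy j (Finset.mem_insert_of_mem hj))
    convert W.add_mem hi' hs using 1
    abel

theorem mk_zero_mem_span_range_iff {ι R M N : Type*} [Fintype ι] [Semiring R] [AddCommMonoid M]
    [Module R M] [AddCommMonoid N] [Module R N] (f : ι → M) (g : ι → N) (w : N) :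
    ((0 : M), w) ∈ span R (Set.range fun j => (f j, g j)) ↔
      w ∈ (LinearMap.ker (Fintype.linearCombination R f)).map (Fintype.linearCombination R g) := by
  simp [mem_span_range_iff_exists_fun, Fintype.linearCombination_apply, Prod.ext_iff,
    Prod.fst_sum, Prod.snd_sum]

section CharTwo

variable {R : Type*} [CommRing R] [CharP R 2]

theorem CharTwo.add_pow_three_sub_sub (x y : R) :
    (x + y) ^ 3 - x ^ 3 - y ^ 3 = x * y * (x + y) := by
  grind

variable [Module (ZMod 2) R]

theorem mul_mul_add_mem_span_singleton {a b x y : R} (hx : x ∈ span (ZMod 2) {a, b})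
    (hy : y ∈ span (ZMod 2) {a, b}) : x * y * (x + y) ∈ span (ZMod 2) {a * b * (a + b)} := by
  obtain ⟨α, β, rfl⟩ := mem_span_pair.mp hx
  obtain ⟨γ, δ, rfl⟩ := mem_span_pair.mp hy
  -- the coefficient is the determinant of `x, y` with respect to `a, b`
  refine mem_span_singleton.mpr ⟨α * δ - β * γ, ?_⟩
  rcases α.eq_zero_or_eq_one with rfl | rfl <;> rcases β.eq_zero_or_eq_one with rfl | rfl <;>
    rcases γ.eq_zero_or_eq_one with rfl | rfl <;> rcases δ.eq_zero_or_eq_one with rfl | rfl <;>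
    simp only [zero_smul, one_smul, mul_zero, zero_mul, mul_one, sub_self, sub_zero, zero_sub,
      ZMod.neg_eq_self_mod_two, add_zero, zero_add] <;>
    grind

theorem map_ker_linearCombination_le_span_singleton {ι : Type*} [Fintype ι] {x : ι → R}
    {a b : R} (hx : span (ZMod 2) (Set.range x) ≤ span (ZMod 2) {a, b}) :
    (LinearMap.ker (Fintype.linearCombination (ZMod 2) x)).map
        (Fintype.linearCombination (ZMod 2) fun j => x j ^ 3) ≤
      span (ZMod 2) {a * b * (a + b)} := by
  rintro _ ⟨c, hc, rfl⟩
  replace hc : ∑ j, c j • x j = 0 := by simpa [Fintype.linearCombination_apply] using hc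
  have hsmul_pow (j : ι) : (c j • x j) ^ 3 = c j • x j ^ 3 := by
    rcases (c j).eq_zero_or_eq_one with h | h <;> simp [h]
  have hcube := AddSubgroup.apply_sum_sub_sum_apply_mem
    (V := (span (ZMod 2) {a, b}).toAddSubgroup)
    (W := (span (ZMod 2) {a * b * (a + b)}).toAddSubgroup) (f := fun t => t ^ 3) (by simp)
    (fun x hx y hy => by
      rw [CharTwo.add_pow_three_sub_sub]
      exact mul_mul_add_mem_span_singleton hx hy)
    (y := fun j => c j • x j) Finset.univ
    (fun j _ => smul_mem _ _ (hx (subset_span (Set.mem_range_self j))))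
  simpa [Fintype.linearCombination_apply, hc, hsmul_pow] using hcube

theorem finrank_map_ker_linearCombination_le_two {ι : Type*} [Fintype ι]
    (hι : Fintype.card ι ≤ 5) (x : ι → R) :
    finrank (ZMod 2) ((LinearMap.ker (Fintype.linearCombination (ZMod 2) x)).map
        (Fintype.linearCombination (ZMod 2) fun j => x j ^ 3)) ≤ 2 := by
  have := FiniteDimensional.span_of_finite (ZMod 2) (Set.finite_range x)
  rcases le_or_gt (finrank (ZMod 2) (span (ZMod 2) (Set.range x))) 2 with hle | hgt
  · obtain ⟨a, b, hab⟩ := exists_span_le_span_pair hle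
    calc _ ≤ finrank (ZMod 2) (span (ZMod 2) {a * b * (a + b)}) :=
          finrank_mono (map_ker_linearCombination_le_span_singleton hab)
      _ ≤ 2 := (finrank_span_le_card _).trans (by simp)
  · have hrank := (Fintype.linearCombination (ZMod 2) x).finrank_range_add_finrank_ker
    rw [finrank_fintype_fun_eq_card, Fintype.range_linearCombination] at hrank
    exact (finrank_map_le _ _).trans (by omega)

end CharTwo

/-- For every `m ≥ 3` there exist `u₁, u₂, u₃ ∈ F_{2^m}²` such that for all
`x₁, …, x₅ ∈ F_{2^m}`, at least one of `u₁, u₂, u₃` is not in the `F_2`-span of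
`{(x_j, x_j³) : 1 ≤ j ≤ 5}`. Equivalently, `ρ₃(BCH(2,m)) ≥ 6`. -/
theorem rho_three_BCH_two_ge_six (m : ℕ) (hm : 3 ≤ m) :
    ∃ u₁ u₂ u₃ : GaloisField 2 m × GaloisField 2 m,
      ∀ x₁ x₂ x₃ x₄ x₅ : GaloisField 2 m,
        u₁ ∉ Submodule.span (ZMod 2)
            ((fun x : GaloisField 2 m => (x, x ^ 3)) '' {x₁, x₂, x₃, x₄, x₅}) ∨
        u₂ ∉ Submodule.span (ZMod 2)
            ((fun x : GaloisField 2 m => (x, x ^ 3)) '' {x₁, x₂, x₃, x₄, x₅}) ∨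
        u₃ ∉ Submodule.span (ZMod 2)
            ((fun x : GaloisField 2 m => (x, x ^ 3)) '' {x₁, x₂, x₃, x₄, x₅}) := by
  obtain ⟨w, hw⟩ : ∃ w : Fin 3 → GaloisField 2 m, LinearIndependent (ZMod 2) w :=
    exists_linearIndependent_of_le_finrank (by rwa [GaloisField.finrank 2 (by omega)])
  refine ⟨(0, w 0), (0, w 1), (0, w 2), fun x₁ x₂ x₃ x₄ x₅ => ?_⟩
  set x := ![x₁, x₂, x₃, x₄, x₅]
  have himage : (fun x : GaloisField 2 m => (x, x ^ 3)) '' {x₁, x₂, x₃, x₄, x₅} =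
      Set.range fun j => (x j, x j ^ 3) := by
    rw [show (fun j => (x j, x j ^ 3)) = (fun x => (x, x ^ 3)) ∘ x from rfl, Set.range_comp]
    simp only [x, Matrix.range_cons, Matrix.range_empty, Set.union_empty, Set.singleton_union]
  by_contra! hmem
  simp only [himage, mk_zero_mem_span_range_iff] at hmem
  set C := (LinearMap.ker (Fintype.linearCombination (ZMod 2) x)).map
    (Fintype.linearCombination (ZMod 2) fun j => x j ^ 3)
  have hw_mem : ∀ i, w i ∈ C := fun i => by fin_cases i <;> simp [hmem]
  have h2 : finrank (ZMod 2) C ≤ 2 := finrank_map_ker_linearCombination_le_two (by simp) x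
  have h3 : 3 ≤ finrank (ZMod 2) C := calc
    3 = Fintype.card (Fin 3) := (Fintype.card_fin 3).symm
    _ ≤ (Set.range w).finrank (ZMod 2) := linearIndependent_iff_card_le_finrank_span.mp hw
    _ ≤ finrank (ZMod 2) C := finrank_mono (span_le.mpr (Set.range_subset_iff.mpr hw_mem))
  omega
end

section
/- For every even integer m ≥ 4 there exist vectors u_1, u_2, u_3 ∈ F_{2^m}² such that for all x_1, x_2, x_3, x_4, x_5, x_6 ∈ F_{2^m}, at least one of u_1, u_2, u_3 does not lie in the F_2-linear span of {(x_j, x_j³) : 1 ≤ j ≤ 6} inside F_{2^m}². (Equivalently, for m ≥ 4 even, the third generalized covering radius satisfies ρ_3(BCH(2,m)) ≥ 7.) -/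
/-!
Take `uᵢ = (0, bᵢ)`, where `b₀, b₁, b₂` are `𝔽₂`-independent and the product `P` of their seven
nonzero `𝔽₂`-combinations `b(v)` is not a cube; rescaling by a non-cube, which exists because
`3 ∣ 2 ^ m - 1`, arranges the latter. If all `uᵢ` lay in the span of the `(xⱼ, xⱼ³)`, `j ≤ 6`,
the coefficients would attach to each `j` a point `pⱼ ∈ 𝔽₂³` such that, for every `v ≠ 0`, the
`xⱼ` with `pⱼ ⬝ v = 1` have sum `0` and cube sum `b(v) ≠ 0`. Such a family has at least three
nonzero members, and double counting over the Fano plane then makes the `pⱼ` with `xⱼ ≠ 0`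
distinct nonzero points. Put `y(pⱼ) = xⱼ`. The vanishing sums make `y` affine on the nonzero
points, `y = ℓ + t` with `ℓ` additive, and then the cube sum of `y` off the line `v⊥` is
`∏_{h ∈ v⊥, h ≠ 0} ℓ(h)`. Every point lies on three lines, so `P = (∏_{h ≠ 0} ℓ(h))³`.
-/

open Finset

namespace BCHCoveringRadius

local notation "𝔽₂³" => Fin 3 → ZMod 2

/- The nonzero vectors of `𝔽₂³` are the seven points of the Fano plane: `line v` is the line
`v⊥` and `offLine v` the four points off it. -/

def line (v : 𝔽₂³) : Finset 𝔽₂³ := {h ∈ univ.erase 0 | h ⬝ᵥ v = 0}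

def offLine (v : 𝔽₂³) : Finset 𝔽₂³ := {μ | μ ⬝ᵥ v = 1}

lemma card_line {v : 𝔽₂³} (hv : v ≠ 0) : #(line v) = 3 := by
  revert v; decide

lemma card_filter_line_le {μ ν : 𝔽₂³} (hμ : μ ≠ 0) (hνμ : ν ≠ μ) :
    #{v ∈ line μ | ν ⬝ᵥ v = 1} ≤ 2 := by
  revert μ ν; decide

lemma exists_line_eq {a b : 𝔽₂³} (ha : a ≠ 0) (hb : b ≠ 0) (hab : a ≠ b) :
    ∃ w ≠ 0, line w = {a, b, a + b} := by
  revert a b; decide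

lemma exists_offLine_eq {v : 𝔽₂³} (hv : v ≠ 0) : ∃ a h₁ h₂ : 𝔽₂³, h₁ ≠ h₂ ∧
    offLine v = {a, a + h₁, a + h₂, a + h₁ + h₂} ∧ line v = {h₁, h₂, h₁ + h₂} := by
  revert v; decide

lemma filter_dotProduct_ne_zero_eq_offLine (v : 𝔽₂³) :
    ({μ ∈ univ.erase 0 | μ ⬝ᵥ v ≠ 0} : Finset 𝔽₂³) = offLine v := by
  revert v; decide

lemma sum_line_eq_sum_erase_zero {R : Type*} [AddCommMonoid R] {y : 𝔽₂³ → R} {w : 𝔽₂³}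
    (hw : ∑ μ ∈ offLine w, y μ = 0) :
    ∑ h ∈ line w, y h = ∑ μ ∈ univ.erase 0, y μ := by
  rw [← sum_filter_add_sum_filter_not (univ.erase 0) (· ⬝ᵥ w = 0),
    filter_dotProduct_ne_zero_eq_offLine,
    hw, add_zero, line]

lemma add_add_eq_sum_erase_zero {R : Type*} [AddCommMonoid R] {y : 𝔽₂³ → R}
    (hy : ∀ v ≠ 0, ∑ μ ∈ offLine v, y μ = 0) {a b : 𝔽₂³} (ha : a ≠ 0) (hb : b ≠ 0) (hab : a ≠ b) :
    y a + y b + y (a + b) = ∑ μ ∈ univ.erase 0, y μ := by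
  obtain ⟨w, hw, hwl⟩ := exists_line_eq ha hb hab
  rw [← sum_line_eq_sum_erase_zero (hy w hw), hwl, sum_insert (by simp [hab, hb]),
    sum_pair (by simp [ha]), add_assoc]

/-- Every line carries the same sum `t` of `y`, the seven points being split by each line and
the four points off it; so `y + t` is additive on the nonzero points. -/
lemma exists_addMonoidHom_of_sum_offLine_eq_zero {R : Type*} [CommRing R] [CharP R 2]
    {y : 𝔽₂³ → R} (hy : ∀ v ≠ 0, ∑ μ ∈ offLine v, y μ = 0) :
    ∃ (ℓ : 𝔽₂³ →+ R) (t : R), ∀ μ ≠ 0, y μ = ℓ μ + t := by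
  set t := ∑ μ ∈ univ.erase 0, y μ
  have h2 : (2 : R) = 0 := CharTwo.two_eq_zero
  let ℓ : 𝔽₂³ → R := fun μ => if μ = 0 then 0 else y μ + t
  refine ⟨AddMonoidHom.mk' ℓ fun a b => ?_, t, fun μ hμ => ?_⟩
  · by_cases ha : a = 0
    · simp [ℓ, ha]
    by_cases hb : b = 0
    · simp [ℓ, hb]
    by_cases hab : a = b
    · subst hab
      simp [ℓ, ha, CharTwo.add_self_eq_zero]
    have hsum := add_add_eq_sum_erase_zero hy ha hb hab
    simp only [ℓ, ha, hb, if_false, CharTwo.add_eq_zero, hab]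
    linear_combination hsum - (y a + y b) * h2
  · simp only [AddMonoidHom.mk'_apply, ℓ, hμ, if_false]
    linear_combination -t * h2

lemma sum_offLine_add_pow_three {R : Type*} [CommRing R] [CharP R 2] (ℓ : 𝔽₂³ →+ R) (t : R)
    {v : 𝔽₂³} (hv : v ≠ 0) : ∑ μ ∈ offLine v, (ℓ μ + t) ^ 3 = ∏ h ∈ line v, ℓ h := by
  obtain ⟨a, h₁, h₂, h₁₂, hoff, hline⟩ := exists_offLine_eq hv
  have hmem : ∀ h ∈ ({h₁, h₂, h₁ + h₂} : Finset 𝔽₂³), h ≠ 0 := fun h hh =>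
    (mem_erase.mp (mem_filter.mp (hline ▸ hh)).1).1
  have h₁0 := hmem h₁ (by simp)
  have h₂0 := hmem h₂ (by simp)
  have h₃0 := hmem (h₁ + h₂) (by simp)
  rw [hoff, hline, sum_insert (by simp [add_assoc, h₁0, h₂0, h₃0]),
    sum_insert (by simp [add_assoc, h₁₂, h₂0]), sum_pair (by simp [add_assoc, h₁0]),
    prod_insert (by simp [h₁₂, h₂0]), prod_pair (by simp [h₁0])]
  simp only [map_add]
  have h2 : (2 : R) = 0 := CharTwo.two_eq_zero
  set A := ℓ a + t
  -- `A³ + (A + H₁)³ + (A + H₂)³ + (A + H₁ + H₂)³ = H₁ H₂ (H₁ + H₂)` in characteristic `2`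
  linear_combination (2 * A ^ 3 + 3 * A ^ 2 * (ℓ h₁ + ℓ h₂) +
    3 * A * (ℓ h₁ ^ 2 + ℓ h₂ ^ 2 + ℓ h₁ * ℓ h₂) + ℓ h₁ ^ 3 + ℓ h₂ ^ 3 + ℓ h₁ ^ 2 * ℓ h₂ +
    ℓ h₁ * ℓ h₂ ^ 2) * h2

lemma prod_prod_line {M : Type*} [CommMonoid M] (f : 𝔽₂³ → M) :
    ∏ v ∈ univ.erase 0, ∏ h ∈ line v, f h = (∏ h ∈ univ.erase 0, f h) ^ 3 := by
  rw [prod_comm' (t' := univ.erase 0) (s' := line) fun v h => by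
      simp only [line, mem_filter, mem_erase, mem_univ, and_true, dotProduct_comm h v]; tauto,
    ← prod_pow]
  exact prod_congr rfl fun h hh => by rw [prod_const, card_line (ne_of_mem_erase hh)]

lemma exists_prod_sum_offLine_pow_three_eq {R : Type*} [CommRing R] [CharP R 2] {y : 𝔽₂³ → R}
    (hy : ∀ v ≠ 0, ∑ μ ∈ offLine v, y μ = 0) :
    ∃ z, ∏ v ∈ univ.erase 0, ∑ μ ∈ offLine v, y μ ^ 3 = z ^ 3 := by
  obtain ⟨ℓ, t, hℓ⟩ := exists_addMonoidHom_of_sum_offLine_eq_zero hy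
  refine ⟨∏ h ∈ univ.erase 0, ℓ h, ?_⟩
  rw [← prod_prod_line]
  refine prod_congr rfl fun v hv => ?_
  rw [← sum_offLine_add_pow_three ℓ t (ne_of_mem_erase hv)]
  refine sum_congr rfl fun μ hμ => ?_
  rw [hℓ μ fun h0 => by simp [offLine, h0] at hμ]

lemma sum_pow_three_eq_zero_of_card_le_two {R ι : Type*} [CommRing R] [CharP R 2]
    {s : Finset ι} (x : ι → R) (hs : #s ≤ 2) (h : ∑ i ∈ s, x i = 0) :
    ∑ i ∈ s, x i ^ 3 = 0 := by
  classical
  rcases (by omega : #s = 0 ∨ #s = 1 ∨ #s = 2) with h0 | h1 | h2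
  · simp [card_eq_zero.mp h0]
  · obtain ⟨a, rfl⟩ := card_eq_one.mp h1
    simp_all
  · obtain ⟨a, b, hab, rfl⟩ := card_eq_two.mp h2
    rw [sum_pair hab, CharTwo.add_eq_zero] at h ⊢
    rw [h]

lemma pow_sum_eq_sum_pow_of_card_le_one {R ι : Type*} [CommSemiring R] [DecidableEq R]
    {s : Finset ι} (x : ι → R) {n : ℕ} (hn : n ≠ 0) (hs : #{i ∈ s | x i ≠ 0} ≤ 1) :
    (∑ i ∈ s, x i) ^ n = ∑ i ∈ s, x i ^ n := by
  rw [← sum_filter_ne_zero,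
    ← sum_filter_of_ne (p := fun i => x i ≠ 0) fun i _ hi => ne_zero_pow hn hi]
  rcases Nat.le_one_iff_eq_zero_or_eq_one.mp hs with h | h
  · simp [card_eq_zero.mp h, hn]
  · obtain ⟨a, ha⟩ := card_eq_one.mp h
    simp [ha]

lemma three_le_card_filter {R ι : Type*} [CommRing R] [CharP R 2] [DecidableEq R] [Fintype ι]
    (x : ι → R) (p : ι → 𝔽₂³) {v : 𝔽₂³} (h₁ : ∑ j with p j ⬝ᵥ v = 1, x j = 0)
    (h₃ : ∑ j with p j ⬝ᵥ v = 1, x j ^ 3 ≠ 0) :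
    3 ≤ #{j ∈ {j | x j ≠ 0} | p j ⬝ᵥ v = 1} := by
  by_contra! hlt
  rw [filter_comm] at hlt
  refine h₃ ?_
  rw [← sum_filter_of_ne (p := fun j => x j ≠ 0) fun j _ hj => ne_zero_pow three_ne_zero hj]
  exact sum_pow_three_eq_zero_of_card_le_two x (by omega) (by rwa [sum_filter_ne_zero])

/-- Double counting over the three lines through `μ`: two indices at `μ` would leave at most
four indices to meet those lines, each of them at most twice, short of the required `3 * 3`. -/
lemma card_filter_eq_le_one {ι : Type*} {S : Finset ι} (hS : #S ≤ 6) (p : ι → 𝔽₂³)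
    (hJ : ∀ v ≠ 0, 3 ≤ #{j ∈ S | p j ⬝ᵥ v = 1}) {μ : 𝔽₂³} (hμ : μ ≠ 0) :
    #{j ∈ S | p j = μ} ≤ 1 := by
  let r : ι → 𝔽₂³ → Prop := fun j v => p j ⬝ᵥ v = 1
  have hlow : #(line μ) • 3 ≤ ∑ v ∈ line μ, #(S.bipartiteBelow r v) :=
    card_nsmul_le_sum _ _ _ fun v hv => hJ v (ne_of_mem_erase (mem_filter.mp hv).1)
  rw [card_line hμ, ← sum_card_bipartiteAbove_eq_sum_card_bipartiteBelow] at hlow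
  have hup : ∑ j ∈ S, #((line μ).bipartiteAbove r j) ≤ #{j ∈ S | ¬p j = μ} • 2 := by
    rw [← sum_filter_of_ne (p := fun j => ¬p j = μ)]
    · exact sum_le_card_nsmul _ _ _ fun j hj => card_filter_line_le hμ (mem_filter.mp hj).2
    · rintro j - hne rfl
      refine hne (card_eq_zero.mpr (filter_eq_empty_iff.mpr fun v hv => ?_))
      simp [r, dotProduct_comm, (mem_filter.mp hv).2]
  have := card_filter_add_card_filter_not (s := S) (fun j => p j = μ)
  simp only [smul_eq_mul] at hlow hup
  omega

theorem exists_prod_sum_pow_three_eq_pow_three {R ι : Type*} [CommRing R] [CharP R 2]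
    [Fintype ι] (hι : Fintype.card ι ≤ 6) (x : ι → R) (p : ι → 𝔽₂³)
    (h₁ : ∀ v ≠ 0, ∑ j with p j ⬝ᵥ v = 1, x j = 0)
    (h₃ : ∀ v ≠ 0, ∑ j with p j ⬝ᵥ v = 1, x j ^ 3 ≠ 0) :
    ∃ z, ∏ v ∈ univ.erase 0, ∑ j with p j ⬝ᵥ v = 1, x j ^ 3 = z ^ 3 := by
  classical
  have hfiber (f : ι → R) (v : 𝔽₂³) :
      ∑ μ ∈ offLine v, ∑ j with p j = μ, f j = ∑ j with p j ⬝ᵥ v = 1, f j := by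
    rw [sum_fiberwise_eq_sum_filter]; simp [offLine]
  obtain ⟨z, hz⟩ := exists_prod_sum_offLine_pow_three_eq (y := fun μ => ∑ j with p j = μ, x j)
    fun v hv => (hfiber x v).trans (h₁ v hv)
  refine ⟨z, (prod_congr rfl fun v _ => ?_).trans hz⟩
  rw [← hfiber]
  refine sum_congr rfl fun μ hμ => (pow_sum_eq_sum_pow_of_card_le_one x three_ne_zero ?_).symm
  rw [filter_comm]
  refine card_filter_eq_le_one ((card_le_univ _).trans hι) p
    (fun v hv => three_le_card_filter x p (h₁ v hv) (h₃ v hv)) ?_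
  rintro rfl
  simp [offLine] at hμ

lemma three_dvd_two_pow_sub_one {m : ℕ} (hm : Even m) : 3 ∣ 2 ^ m - 1 := by
  obtain ⟨k, rfl⟩ := hm
  simpa [← two_mul, pow_mul] using Nat.sub_dvd_pow_sub_pow 4 1 k

/-- An element of order `3` in `Kˣ` keeps the cube map on `Kˣ` from being injective, hence from
being surjective. -/
lemma exists_ne_zero_forall_pow_three_ne {K : Type*} [Field K] [Finite K]
    (h : 3 ∣ Nat.card K - 1) : ∃ ζ : K, ζ ≠ 0 ∧ ∀ z, z ^ 3 ≠ ζ := by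
  have : Fact (Nat.Prime 3) := ⟨Nat.prime_three⟩
  obtain ⟨ω, hω⟩ := exists_prime_orderOf_dvd_card' (G := Kˣ) 3 (by rwa [Nat.card_units])
  by_contra! hcube
  have hsurj : Function.Surjective (powMonoidHom 3 : Kˣ →* Kˣ) := fun u => by
    obtain ⟨z, hz⟩ := hcube u u.ne_zero
    refine ⟨Units.mk0 z fun h0 => u.ne_zero ?_, Units.ext (by simp [hz])⟩
    simp [← hz, h0]
  have hω1 : ω = 1 := Finite.injective_iff_surjective.mpr hsurj (by simp [← hω, pow_orderOf_eq_one])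
  simp [hω1] at hω

/-- Scaling `b` by a non-cube `ζ` multiplies the product of its seven nonzero combinations by
`ζ ^ 7`, so one of `b` and `ζ • b` gives a non-cube. -/
lemma exists_prod_sum_smul_ne_pow_three {K : Type*} [Field K] [Finite K] [Algebra (ZMod 2) K]
    (h3 : 3 ∣ Nat.card K - 1) (hr : 3 ≤ Module.finrank (ZMod 2) K) :
    ∃ b : Fin 3 → K, (∀ v : 𝔽₂³, v ≠ 0 → ∑ i, v i • b i ≠ 0) ∧
      ∀ z, ∏ v ∈ (univ.erase 0 : Finset 𝔽₂³), ∑ i, v i • b i ≠ z ^ 3 := by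
  obtain ⟨ζ, hζ, hζc⟩ := exists_ne_zero_forall_pow_three_ne h3
  let b := Module.finBasis (ZMod 2) K ∘ Fin.castLE hr
  have hli : LinearIndependent (ZMod 2) b :=
    (Module.finBasis (ZMod 2) K).linearIndependent.comp _ (Fin.castLE_injective hr)
  have hb : ∀ v : 𝔽₂³, v ≠ 0 → ∑ i, v i • b i ≠ 0 := fun v hv h =>
    hv (funext (Fintype.linearIndependent_iff.mp hli v h))
  by_cases hcube : ∃ w, ∏ v ∈ (univ.erase 0 : Finset 𝔽₂³), ∑ i, v i • b i = w ^ 3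
  swap
  · exact ⟨b, hb, fun z hz => hcube ⟨z, hz⟩⟩
  obtain ⟨w, hw⟩ := hcube
  have hw0 : w ≠ 0 := by
    rintro rfl
    obtain ⟨v, hv, h0⟩ := prod_eq_zero_iff.mp (hw.trans (zero_pow three_ne_zero))
    exact hb v (ne_of_mem_erase hv) h0
  have hsmul (v : 𝔽₂³) : ∑ i, v i • (ζ * b i) = ζ * ∑ i, v i • b i := by
    rw [mul_sum]
    exact sum_congr rfl fun i _ => (mul_smul_comm _ _ _).symm
  refine ⟨fun i => ζ * b i, fun v hv => ?_, fun z hz => ?_⟩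
  · rw [hsmul]; exact mul_ne_zero hζ (hb v hv)
  · simp_rw [hsmul, prod_mul_distrib, prod_const, hw] at hz
    rw [show #(univ.erase (0 : 𝔽₂³)) = 7 by simp] at hz
    refine hζc (z / (ζ ^ 2 * w)) ?_
    rw [div_pow, ← hz]
    field_simp

lemma sum_filter_eq_one_eq_sum_smul {ι M : Type*} [AddCommMonoid M] [Module (ZMod 2) M]
    (s : Finset ι) (a : ι → ZMod 2) (w : ι → M) :
    ∑ j ∈ s with a j = 1, w j = ∑ j ∈ s, a j • w j := by
  rw [sum_filter]
  refine sum_congr rfl fun j _ => ?_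
  obtain h | h : a j = 0 ∨ a j = 1 := by generalize a j = t; decide +revert
  all_goals simp [h]

lemma exists_forall_sum_filter_eq_sum_smul {ι n M : Type*} [Fintype ι] [Fintype n]
    [AddCommMonoid M] [Module (ZMod 2) M] {w : ι → M} {u : n → M}
    (hu : ∀ i, u i ∈ Submodule.span (ZMod 2) (Set.range w)) :
    ∃ p : ι → n → ZMod 2, ∀ v, ∑ j with p j ⬝ᵥ v = 1, w j = ∑ i, v i • u i := by
  choose c hc using fun i => (Submodule.mem_span_range_iff_exists_fun _).mp (hu i)
  refine ⟨fun j i => c i j, fun v => ?_⟩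
  simp only [sum_filter_eq_one_eq_sum_smul, dotProduct, sum_smul, ← hc, smul_sum, smul_smul,
    mul_comm]
  exact sum_comm

lemma image_six_eq_range {α β : Type*} (f : α → β) (x₁ x₂ x₃ x₄ x₅ x₆ : α) :
    f '' {x₁, x₂, x₃, x₄, x₅, x₆} = Set.range fun j => f (![x₁, x₂, x₃, x₄, x₅, x₆] j) := by
  ext; simp [Fin.exists_fin_succ, eq_comm]

end BCHCoveringRadius

open BCHCoveringRadius in
/-- For every even `m ≥ 4` there exist `u₁, u₂, u₃ ∈ F_{2^m}²` such that for all
`x₁, …, x₆ ∈ F_{2^m}`, at least one of `u₁, u₂, u₃` is not in the `F_2`-span of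
`{(x_j, x_j³) : 1 ≤ j ≤ 6}`. Equivalently, for even `m ≥ 4`, `ρ₃(BCH(2,m)) ≥ 7`. -/
theorem rho_three_BCH_two_ge_seven_of_even (m : ℕ) (hm : 4 ≤ m) (hme : Even m) :
    ∃ u₁ u₂ u₃ : GaloisField 2 m × GaloisField 2 m,
      ∀ x₁ x₂ x₃ x₄ x₅ x₆ : GaloisField 2 m,
        u₁ ∉ Submodule.span (ZMod 2)
            ((fun x : GaloisField 2 m => (x, x ^ 3)) '' {x₁, x₂, x₃, x₄, x₅, x₆}) ∨
        u₂ ∉ Submodule.span (ZMod 2)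
            ((fun x : GaloisField 2 m => (x, x ^ 3)) '' {x₁, x₂, x₃, x₄, x₅, x₆}) ∨
        u₃ ∉ Submodule.span (ZMod 2)
            ((fun x : GaloisField 2 m => (x, x ^ 3)) '' {x₁, x₂, x₃, x₄, x₅, x₆}) := by
  obtain ⟨b, hb, hbc⟩ := exists_prod_sum_smul_ne_pow_three (K := GaloisField 2 m)
    (by rw [GaloisField.card 2 m (by omega)]; exact three_dvd_two_pow_sub_one hme)
    (by rw [GaloisField.finrank 2 (by omega)]; omega)
  refine ⟨(0, b 0), (0, b 1), (0, b 2), fun x₁ x₂ x₃ x₄ x₅ x₆ => ?_⟩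
  rw [image_six_eq_range]
  generalize ![x₁, x₂, x₃, x₄, x₅, x₆] = x
  by_contra! h
  obtain ⟨p, hp⟩ := exists_forall_sum_filter_eq_sum_smul (w := fun j => (x j, x j ^ 3))
    (u := fun i => (0, b i)) (by simpa [Fin.forall_fin_succ] using h)
  have hsum (v : Fin 3 → ZMod 2) : ∑ j with p j ⬝ᵥ v = 1, x j = 0 ∧
      ∑ j with p j ⬝ᵥ v = 1, x j ^ 3 = ∑ i, v i • b i := by
    simpa [Prod.ext_iff, Prod.fst_sum, Prod.snd_sum] using hp v
  obtain ⟨z, hz⟩ := exists_prod_sum_pow_three_eq_pow_three (by simp) x p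
    (fun v _ => (hsum v).1) (fun v hv => (hsum v).2 ▸ hb v hv)
  exact hbc z ((prod_congr rfl fun v _ => (hsum v).2).symm.trans hz)
end

section
/- For every integer m ≥ 4 there exist vectors u_1, u_2, u_3, u_4 ∈ F_{2^m}² such that for all x_1, …, x_7 ∈ F_{2^m}, at least one of u_1, u_2, u_3, u_4 does not lie in the F_2-linear span of {(x_j, x_j³) : 1 ≤ j ≤ 7} inside F_{2^m}². (Equivalently, the fourth generalized covering radius satisfies ρ_4(BCH(2,m)) ≥ 8.) -/
open Submodule Module

private lemma zmod2_cases : ∀ r : ZMod 2, r = 0 ∨ r = 1 := by decide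

private lemma card_pairs_le_three {d : ℕ} (hd : d ≤ 3) :
    Fintype.card {p : Fin d × Fin d // p.1 < p.2} ≤ 3 := by
  interval_cases d <;> decide

private theorem bch_aux {F : Type*} [Field F] [Algebra (ZMod 2) F]
    [FiniteDimensional (ZMod 2) F] (h2 : (2 : F) = 0)
    (b : Fin 4 → F) (hb : LinearIndependent (ZMod 2) b)
    (x₁ x₂ x₃ x₄ x₅ x₆ x₇ : F) :
    ((0 : F), b 0) ∉ Submodule.span (ZMod 2)
        ((fun x : F => (x, x ^ 3)) '' {x₁, x₂, x₃, x₄, x₅, x₆, x₇}) ∨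
    ((0 : F), b 1) ∉ Submodule.span (ZMod 2)
        ((fun x : F => (x, x ^ 3)) '' {x₁, x₂, x₃, x₄, x₅, x₆, x₇}) ∨
    ((0 : F), b 2) ∉ Submodule.span (ZMod 2)
        ((fun x : F => (x, x ^ 3)) '' {x₁, x₂, x₃, x₄, x₅, x₆, x₇}) ∨
    ((0 : F), b 3) ∉ Submodule.span (ZMod 2)
        ((fun x : F => (x, x ^ 3)) '' {x₁, x₂, x₃, x₄, x₅, x₆, x₇}) := by
  classical
  set f : F → F × F := fun x : F => (x, x ^ 3) with hfdef
  set P : Set F := {x₁, x₂, x₃, x₄, x₅, x₆, x₇} with hPdef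
  set W := Submodule.span (ZMod 2) (f '' P) with hWdef
  by_contra hcon
  push_neg at hcon
  obtain ⟨hc1, hc2, hc3, hc4⟩ := hcon
  have hmem : ∀ i : Fin 4, ((0 : F), b i) ∈ W := by
    intro i; fin_cases i <;> assumption
  set K := Submodule.span (ZMod 2) P with hKdef
  set d := Module.finrank (ZMod 2) K with hddef
  -- finrank bounds via the 7-element generating families
  have hPr : P = Set.range ![x₁, x₂, x₃, x₄, x₅, x₆, x₇] := by
    ext y; simp [hPdef, Matrix.range_cons, Matrix.range_empty]; tauto
  have himg : f '' P = Set.range (f ∘ ![x₁, x₂, x₃, x₄, x₅, x₆, x₇]) := by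
    rw [hPr, Set.range_comp]
  have hW7 : Module.finrank (ZMod 2) W ≤ 7 := by
    have h := finrank_range_le_card (R := ZMod 2) (f ∘ ![x₁, x₂, x₃, x₄, x₅, x₆, x₇])
    simp only [Set.finrank, Fintype.card_fin] at h
    rw [hWdef, himg]
    exact h.trans (by norm_num)
  by_cases hd3 : d ≤ 3
  · -- low rank case: use the polar form span Z
    let c : Basis (Fin d) (ZMod 2) K := Module.finBasis (ZMod 2) K
    let cf : Fin d → F := fun i => (c i : F)
    have hKcf : K = Submodule.span (ZMod 2) (Set.range cf) := by
      have h1 : Submodule.map K.subtype (Submodule.span (ZMod 2) (Set.range c))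
          = Submodule.span (ZMod 2) (Set.range cf) := by
        rw [Submodule.map_span]
        congr 1
        ext y
        simp [cf]
      rw [c.span_eq, Submodule.map_top, Submodule.range_subtype] at h1
      exact h1
    let g : {p : Fin d × Fin d // p.1 < p.2} → F :=
      fun p => cf p.1.1 ^ 2 * cf p.1.2 + cf p.1.1 * cf p.1.2 ^ 2
    set Z := Submodule.span (ZMod 2) (Set.range g) with hZdef
    have hZ3 : Module.finrank (ZMod 2) Z ≤ 3 := by
      have h := finrank_range_le_card (R := ZMod 2) g
      simp only [Set.finrank] at h
      exact h.trans (card_pairs_le_three hd3)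
    have hBZ : ∀ a ∈ K, ∀ a' ∈ K, a ^ 2 * a' + a * a' ^ 2 ∈ Z := by
      intro a ha a' ha'
      rw [hKcf] at ha ha'
      induction ha, ha' using Submodule.span_induction₂ with
      | mem_mem x y hx hy =>
        obtain ⟨i, rfl⟩ := hx
        obtain ⟨j, rfl⟩ := hy
        rcases lt_trichotomy i j with hij | hij | hij
        · exact subset_span ⟨⟨(i, j), hij⟩, rfl⟩
        · subst hij
          rw [show cf i ^ 2 * cf i + cf i * cf i ^ 2 = 0 by linear_combination cf i ^ 3 * h2]
          exact zero_mem Z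
        · rw [show cf i ^ 2 * cf j + cf i * cf j ^ 2
              = cf j ^ 2 * cf i + cf j * cf i ^ 2 by ring]
          exact subset_span ⟨⟨(j, i), hij⟩, rfl⟩
      | zero_left y hy => rw [show (0:F) ^ 2 * y + 0 * y ^ 2 = 0 by ring]; exact zero_mem Z
      | zero_right x hx => rw [show x ^ 2 * (0:F) + x * 0 ^ 2 = 0 by ring]; exact zero_mem Z
      | add_left x y z hx hy hz ih1 ih2 =>
        rw [show (x + y) ^ 2 * z + (x + y) * z ^ 2
            = (x ^ 2 * z + x * z ^ 2) + (y ^ 2 * z + y * z ^ 2) by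
          linear_combination x * y * z * h2]
        exact add_mem ih1 ih2
      | add_right x y z hx hy hz ih1 ih2 =>
        rw [show x ^ 2 * (y + z) + x * (y + z) ^ 2
            = (x ^ 2 * y + x * y ^ 2) + (x ^ 2 * z + x * z ^ 2) by
          linear_combination x * y * z * h2]
        exact add_mem ih1 ih2
      | smul_left r x y hx hy ih =>
        rcases zmod2_cases r with rfl | rfl
        · rw [show ((0 : ZMod 2) • x) ^ 2 * y + ((0 : ZMod 2) • x) * y ^ 2 = 0 by
            rw [zero_smul]; ring]
          exact zero_mem Z
        · rw [one_smul]
          exact ih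
      | smul_right r x y hx hy ih =>
        rcases zmod2_cases r with rfl | rfl
        · rw [show x ^ 2 * ((0 : ZMod 2) • y) + x * ((0 : ZMod 2) • y) ^ 2 = 0 by
            rw [zero_smul]; ring]
          exact zero_mem Z
        · rw [one_smul]
          exact ih
    have hM : ∀ v : F × F, v ∈ W → v.1 ∈ K ∧ v.2 + v.1 ^ 3 ∈ Z := by
      intro v hv
      induction hv using Submodule.span_induction with
      | mem v hvP =>
        obtain ⟨x, hx, rfl⟩ := hvP
        refine ⟨subset_span hx, ?_⟩
        show x ^ 3 + x ^ 3 ∈ Z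
        rw [show x ^ 3 + x ^ 3 = 0 by linear_combination x ^ 3 * h2]
        exact zero_mem Z
      | zero =>
        exact ⟨zero_mem K, by simpa using zero_mem Z⟩
      | add v w hv hw ihv ihw =>
        obtain ⟨hv1, hv2⟩ := ihv
        obtain ⟨hw1, hw2⟩ := ihw
        refine ⟨add_mem hv1 hw1, ?_⟩
        have key : (v + w).2 + (v + w).1 ^ 3
            = (v.2 + v.1 ^ 3) + (w.2 + w.1 ^ 3) + (v.1 ^ 2 * w.1 + v.1 * w.1 ^ 2) := by
          simp only [Prod.fst_add, Prod.snd_add]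
          linear_combination (v.1 ^ 2 * w.1 + v.1 * w.1 ^ 2) * h2
        rw [key]
        exact add_mem (add_mem hv2 hw2) (hBZ _ hv1 _ hw1)
      | smul r v hv ihv =>
        rcases zmod2_cases r with rfl | rfl
        · rw [zero_smul]
          exact ⟨zero_mem K, by simpa using zero_mem Z⟩
        · rw [one_smul]
          exact ihv
    have hbZ : ∀ i : Fin 4, b i ∈ Z := by
      intro i
      have h := (hM _ (hmem i)).2
      simpa using h
    let b' : Fin 4 → Z := fun i => ⟨b i, hbZ i⟩
    have hb' : LinearIndependent (ZMod 2) b' :=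
      LinearIndependent.of_comp Z.subtype (by exact hb)
    have h4 := hb'.fintype_card_le_finrank
    simp only [Fintype.card_fin] at h4
    omega
  · -- high rank case: rank-nullity
    let φ := (LinearMap.fst (ZMod 2) F F).domRestrict W
    have hrange : LinearMap.range φ = K := by
      rw [LinearMap.range_domRestrict, hWdef, Submodule.map_span, hKdef]
      congr 1
      ext y
      simp [hfdef]
    have hker4 : 4 ≤ Module.finrank (ZMod 2) (LinearMap.ker φ) := by
      have hkimem : ∀ i : Fin 4, (⟨((0 : F), b i), hmem i⟩ : W) ∈ LinearMap.ker φ := by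
        intro i
        rw [LinearMap.mem_ker]
        rfl
      let ki : Fin 4 → LinearMap.ker φ := fun i => ⟨⟨((0 : F), b i), hmem i⟩, hkimem i⟩
      let ψ : LinearMap.ker φ →ₗ[ZMod 2] F :=
        (LinearMap.snd (ZMod 2) F F).comp (W.subtype.comp (LinearMap.ker φ).subtype)
      have hcomp : (⇑ψ) ∘ ki = b := funext fun i => rfl
      have hψki : LinearIndependent (ZMod 2) ((⇑ψ) ∘ ki) := hcomp ▸ hb
      have hki : LinearIndependent (ZMod 2) ki := LinearIndependent.of_comp ψ hψki
      have h4 := hki.fintype_card_le_finrank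
      simpa using h4
    have hrank := LinearMap.finrank_range_add_finrank_ker φ
    rw [hrange] at hrank
    omega

/-- For every `m ≥ 4` there exist `u₁, u₂, u₃, u₄ ∈ F_{2^m}²` such that for all
`x₁, …, x₇ ∈ F_{2^m}`, at least one of the `uᵢ` is not in the `F_2`-span of
`{(x_j, x_j³) : 1 ≤ j ≤ 7}`. Equivalently, `ρ₄(BCH(2,m)) ≥ 8`. -/
theorem rho_four_BCH_two_ge_eight (m : ℕ) (hm : 4 ≤ m) :
    ∃ u₁ u₂ u₃ u₄ : GaloisField 2 m × GaloisField 2 m,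
      ∀ x₁ x₂ x₃ x₄ x₅ x₆ x₇ : GaloisField 2 m,
        u₁ ∉ Submodule.span (ZMod 2)
            ((fun x : GaloisField 2 m => (x, x ^ 3)) '' {x₁, x₂, x₃, x₄, x₅, x₆, x₇}) ∨
        u₂ ∉ Submodule.span (ZMod 2)
            ((fun x : GaloisField 2 m => (x, x ^ 3)) '' {x₁, x₂, x₃, x₄, x₅, x₆, x₇}) ∨
        u₃ ∉ Submodule.span (ZMod 2)
            ((fun x : GaloisField 2 m => (x, x ^ 3)) '' {x₁, x₂, x₃, x₄, x₅, x₆, x₇}) ∨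
        u₄ ∉ Submodule.span (ZMod 2)
            ((fun x : GaloisField 2 m => (x, x ^ 3)) '' {x₁, x₂, x₃, x₄, x₅, x₆, x₇}) := by
  classical
  set F := GaloisField 2 m with hFdef
  have h2 : (2 : F) = 0 := by
    have := CharP.cast_eq_zero F 2
    exact_mod_cast this
  have hfr : Module.finrank (ZMod 2) F = m := GaloisField.finrank 2 (by omega)
  let bb := Module.finBasis (ZMod 2) F
  let b : Fin 4 → F := fun i => bb ⟨i.1, by rw [hfr]; exact lt_of_lt_of_le i.isLt hm⟩
  have hb : LinearIndependent (ZMod 2) b := by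
    apply bb.linearIndependent.comp
    intro i j hij
    exact Fin.ext (by simpa using congrArg Fin.val hij)
  refine ⟨(0, b 0), (0, b 1), (0, b 2), (0, b 3), ?_⟩
  intro x₁ x₂ x₃ x₄ x₅ x₆ x₇
  exact bch_aux h2 b hb x₁ x₂ x₃ x₄ x₅ x₆ x₇
end

section
/- Let k ≥ 1 and m ≥ 2 be integers satisfying (2k−1)! · 2^m ≥ 2^{k(2k−1)}. Then there exist vectors u_1, …, u_k ∈ F_{2^m}² such that for all x_1, …, x_{2k−1} ∈ F_{2^m}, at least one u_i does not lie in the F_2-linear span of {(x_j, x_j³) : 1 ≤ j ≤ 2k−1} inside F_{2^m}². (Equivalently, ρ_k(BCH(2,m)) ≥ 2k whenever 2^m ≥ 2^{k(2k−1)}/(2k−1)!.) -/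
/-! A tuple `u` that is covered by `x : Fin d → F` (with `d = 2k - 1`) is covered by every
`d`-subset `s ⊇ range x` of `F = 𝔽_{2^m}`, and the span of `{(y, y³) : y ∈ s}` has at most `2^d`
elements. So at most `C(N, d) · 2^(dk)` of the `N^(2k)` tuples are covered (`N = 2^m`), and the
hypothesis makes this a strict minority:
`C(N, d) · 2^(dk) ≤ C(N, d) · d! · N = N (N - 1) ⋯ (N - d + 1) · N < N^(d + 1)` when `d ≥ 2`,
while for `d = 1` it reads `2N < N²`. -/

namespace Nat

open scoped Nat

theorem mul_factorial_le_pow_self (n : ℕ) : n * n ! ≤ n ^ n := by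
  rcases n.eq_zero_or_pos with rfl | hn
  · simp
  have hfact : n ! ≤ n ^ (n - 1) := by
    have h := factorial_mul_descFactorial (Nat.sub_le n 1)
    rw [Nat.sub_sub_self hn, factorial_one, one_mul] at h
    exact h ▸ descFactorial_le_pow n (n - 1)
  calc n * n ! ≤ n * n ^ (n - 1) := Nat.mul_le_mul_left n hfact
    _ = n ^ n := by rw [← _root_.pow_succ', Nat.sub_add_cancel hn]

theorem two_mul_sub_one_le_two_pow (k : ℕ) : 2 * k - 1 ≤ 2 ^ k := by
  rcases k.eq_zero_or_pos with rfl | hk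
  · simp
  have := Nat.lt_two_pow_self (n := k - 1)
  have : 2 ^ k = 2 * 2 ^ (k - 1) := by rw [← _root_.pow_succ', Nat.sub_add_cancel hk]
  omega

variable {k N : ℕ}

theorem two_mul_sub_one_le_of_two_pow_le (h : 2 ^ (k * (2 * k - 1)) ≤ (2 * k - 1)! * N) :
    2 * k - 1 ≤ N := by
  set d := 2 * k - 1
  refine Nat.le_of_mul_le_mul_left ?_ (factorial_pos d)
  calc d ! * d = d * d ! := mul_comm _ _
    _ ≤ d ^ d := mul_factorial_le_pow_self d
    _ ≤ (2 ^ k) ^ d := Nat.pow_le_pow_left (two_mul_sub_one_le_two_pow k) d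
    _ = 2 ^ (k * d) := (pow_mul 2 k d).symm
    _ ≤ d ! * N := h

theorem choose_mul_two_pow_lt (hk : 1 ≤ k) (hN : 3 ≤ N)
    (h : 2 ^ (k * (2 * k - 1)) ≤ (2 * k - 1)! * N) :
    N.choose (2 * k - 1) * 2 ^ ((2 * k - 1) * k) < N ^ (2 * k) := by
  obtain rfl | hk2 := hk.eq_or_lt
  · norm_num
    nlinarith
  set d := 2 * k - 1
  calc N.choose d * 2 ^ (d * k) ≤ N.choose d * (d ! * N) := by
        rw [mul_comm d k]
        exact Nat.mul_le_mul_left _ h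
    _ = N.descFactorial d * N := by rw [descFactorial_eq_factorial_mul_choose]; ring
    _ < N ^ d * N := Nat.mul_lt_mul_of_pos_right (descFactorial_lt_pow (by omega) (by omega))
        (by omega)
    _ = N ^ (2 * k) := by rw [← _root_.pow_succ]; congr 1; omega

end Nat

section SpanCounting

open Finset Submodule

variable {K V : Type*} [Field K] [Finite K] [AddCommGroup V] [Module K V]

theorem Submodule.natCard_span_finset_le (s : Finset V) :
    Nat.card (span K (s : Set V)) ≤ Nat.card K ^ s.card := by
  rw [Module.natCard_eq_pow_finrank (K := K)]
  exact Nat.pow_le_pow_right Nat.card_pos (finrank_span_finset_le_card s)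

variable {F ι : Type*} [Finite F] [Finite ι] [Finite V]

theorem ncard_setOf_forall_mem_span_range_le (φ : F → V) {d : ℕ} (hd : d ≤ Nat.card F) :
    {u : ι → V | ∃ x : Fin d → F, ∀ i, u i ∈ span K (Set.range (φ ∘ x))}.ncard ≤
      (Nat.card F).choose d * Nat.card K ^ (d * Nat.card ι) := by
  classical
  have := Fintype.ofFinite F
  have := Fintype.ofFinite ι
  have := Fintype.ofFinite V
  let box (s : Finset F) : Finset (ι → V) :=
    Fintype.piFinset fun _ => (span K (s.image φ : Set V) : Set V).toFinset
  have hcover : {u : ι → V | ∃ x : Fin d → F, ∀ i, u i ∈ span K (Set.range (φ ∘ x))} ⊆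
      ((powersetCard d univ).biUnion box : Finset (ι → V)) := by
    rintro u ⟨x, hx⟩
    obtain ⟨s, hxs, hs⟩ := exists_superset_card_eq (s := univ.image x) (n := d)
      (card_image_le.trans (by simp)) (by rwa [← Nat.card_eq_fintype_card])
    rw [mem_coe, mem_biUnion]
    refine ⟨s, mem_powersetCard.2 ⟨subset_univ s, hs⟩,
      Fintype.mem_piFinset.2 fun i => Set.mem_toFinset.2 (span_mono ?_ (hx i))⟩
    rintro _ ⟨j, rfl⟩
    exact mem_image_of_mem φ (hxs (mem_image_of_mem x (mem_univ j)))
  have hbox (s : Finset F) (hs : s.card = d) : (box s).card ≤ Nat.card K ^ (d * Nat.card ι) := by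
    rw [Fintype.card_piFinset, prod_const, card_univ, ← Nat.card_eq_fintype_card, pow_mul]
    refine Nat.pow_le_pow_left ?_ _
    rw [Set.toFinset_card, ← Nat.card_eq_fintype_card]
    exact (natCard_span_finset_le _).trans
      (Nat.pow_le_pow_right Nat.card_pos (card_image_le.trans hs.le))
  calc _ ≤ ((powersetCard d univ).biUnion box).card := by
        simpa only [Set.ncard_coe_finset] using Set.ncard_le_ncard hcover
    _ ≤ ∑ s ∈ powersetCard d univ, (box s).card := card_biUnion_le
    _ ≤ ∑ _s ∈ powersetCard d univ, Nat.card K ^ (d * Nat.card ι) :=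
        sum_le_sum fun s hs => hbox s (mem_powersetCard.1 hs).2
    _ = _ := by rw [sum_const, card_powersetCard, card_univ, smul_eq_mul,
        ← Nat.card_eq_fintype_card]

theorem exists_forall_exists_notMem_span_range_of_lt (φ : F → V) {d : ℕ}
    (hd : d ≤ Nat.card F)
    (hcard : (Nat.card F).choose d * Nat.card K ^ (d * Nat.card ι) < Nat.card V ^ Nat.card ι) :
    ∃ u : ι → V, ∀ x : Fin d → F, ∃ i, u i ∉ span K (Set.range (φ ∘ x)) := by
  by_contra! hall
  have huniv : {u : ι → V | ∃ x : Fin d → F, ∀ i, u i ∈ span K (Set.range (φ ∘ x))} =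
      Set.univ := Set.eq_univ_of_forall hall
  have := ncard_setOf_forall_mem_span_range_le (K := K) (ι := ι) φ hd
  rw [huniv, Set.ncard_univ, Nat.card_fun] at this
  omega

end SpanCounting

/-- If `k ≥ 1`, `m ≥ 2` and `(2k−1)! · 2^m ≥ 2^{k(2k−1)}`, then there exist
`u₁, …, u_k ∈ F_{2^m}²` such that for all `x₁, …, x_{2k−1} ∈ F_{2^m}`, some `uᵢ` is not in the
`F_2`-span of `{(x_j, x_j³) : 1 ≤ j ≤ 2k−1}`. Equivalently,
`ρ_k(BCH(2,m)) ≥ 2k` whenever `2^m ≥ 2^{k(2k−1)}/(2k−1)!`. -/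
theorem rho_k_BCH_two_ge_two_k (k m : ℕ) (hk : 1 ≤ k) (hm : 2 ≤ m)
    (h : 2 ^ (k * (2 * k - 1)) ≤ Nat.factorial (2 * k - 1) * 2 ^ m) :
    ∃ u : Fin k → GaloisField 2 m × GaloisField 2 m,
      ∀ x : Fin (2 * k - 1) → GaloisField 2 m,
        ∃ i, u i ∉ Submodule.span (ZMod 2)
          (Set.range fun j => (x j, x j ^ 3)) := by
  have hcard : Nat.card (GaloisField 2 m) = 2 ^ m := GaloisField.card 2 m (by omega)
  have hN : 3 ≤ 2 ^ m := (by norm_num : 3 ≤ 2 ^ 2).trans (Nat.pow_le_pow_right two_pos hm)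
  refine exists_forall_exists_notMem_span_range_of_lt (K := ZMod 2) (fun y => (y, y ^ 3))
    (hcard ▸ Nat.two_mul_sub_one_le_of_two_pow_le h) ?_
  rw [Nat.card_prod, hcard, Nat.card_zmod, Nat.card_fin, ← pow_two, ← pow_mul]
  exact Nat.choose_mul_two_pow_lt hk hN h
end

section
/- Let m ≥ 4 be an even integer. Then there exist α_1, α_2, α_3 ∈ F_{2^m} such that {α_1, α_2, α_3} is linearly independent over the prime subfield F_2 and the element A = α_1·α_2·α_3·(α_1+α_2)·(α_1+α_3)·(α_2+α_3)·(α_1+α_2+α_3) is not a cube in F_{2^m}. -/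
/-- For every even `m ≥ 4` there exist `α₁, α₂, α₃ ∈ F_{2^m}`, linearly independent over
`F_2`, such that `A = α₁α₂α₃(α₁+α₂)(α₁+α₃)(α₂+α₃)(α₁+α₂+α₃)` is not a cube in `F_{2^m}`. -/
theorem exists_linearIndependent_A_not_cube (m : ℕ) (hm : 4 ≤ m) (hme : Even m) :
    ∃ α₁ α₂ α₃ : GaloisField 2 m,
      LinearIndependent (ZMod 2) ![α₁, α₂, α₃] ∧
      ¬ ∃ t : GaloisField 2 m, t ^ 3 =
        α₁ * α₂ * α₃ * (α₁ + α₂) * (α₁ + α₃) * (α₂ + α₃) * (α₁ + α₂ + α₃) := by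
  have hm0 : m ≠ 0 := by omega
  -- Step 1: there is a non-cube `lam` in the field.
  have hcard : Nat.card (GaloisField 2 m) = 2 ^ m := GaloisField.card 2 m hm0
  have hunits : Nat.card (GaloisField 2 m)ˣ = 2 ^ m - 1 := by
    rw [Nat.card_units, hcard]
  have h3d : 3 ∣ 2 ^ m - 1 := by
    obtain ⟨k, rfl⟩ := hme
    have h4 : (2:ℕ) ^ (k + k) = 4 ^ k := by rw [← two_mul, pow_mul]; norm_num
    have hx : 4 ^ k % 3 = 1 := by
      simpa [Nat.ModEq] using (Nat.ModEq.pow k (show 4 ≡ 1 [MOD 3] by decide))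
    have hx1 : 1 ≤ 4 ^ k := Nat.one_le_pow _ _ (by norm_num)
    rw [h4]; omega
  obtain ⟨ζ, hζ⟩ := exists_prime_orderOf_dvd_card' (G := (GaloisField 2 m)ˣ) 3
    (by rw [hunits]; exact h3d)
  have hζ1 : ζ ≠ 1 := by
    intro h; rw [h, orderOf_one] at hζ; norm_num at hζ
  have hζ3 : ζ ^ 3 = 1 := by rw [← hζ]; exact pow_orderOf_eq_one ζ
  have hni : ¬ Function.Surjective (fun u : (GaloisField 2 m)ˣ => u ^ 3) := by
    intro hs
    have hinj := Finite.injective_iff_surjective.mpr hs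
    exact hζ1 (hinj (by simpa using hζ3))
  rw [Function.Surjective] at hni
  push_neg at hni
  obtain ⟨u, hu⟩ := hni
  have hlam : ∀ t : GaloisField 2 m, t ^ 3 ≠ (u : GaloisField 2 m) := by
    intro t ht
    have ht0 : t ≠ 0 := by
      intro h; rw [h] at ht
      simp at ht
      exact u.ne_zero ht.symm
    exact hu (Units.mk0 t ht0) (by ext; simpa using ht)
  set lam : GaloisField 2 m := (u : GaloisField 2 m) with hlamdef
  have hlam0 : lam ≠ 0 := u.ne_zero
  -- Step 2: a linearly independent triple.
  have hfr : Module.finrank (ZMod 2) (GaloisField 2 m) = m := GaloisField.finrank 2 hm0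
  let b := Module.finBasis (ZMod 2) (GaloisField 2 m)
  have h3 : 3 ≤ Module.finrank (ZMod 2) (GaloisField 2 m) := by omega
  have hinj : Function.Injective (fun i : Fin 3 => Fin.castLE h3 i) :=
    fun i j h => Fin.castLE_injective h3 h
  have hLI0 := b.linearIndependent.comp _ hinj
  set β₁ := b (Fin.castLE h3 0)
  set β₂ := b (Fin.castLE h3 1)
  set β₃ := b (Fin.castLE h3 2)
  have hLI : LinearIndependent (ZMod 2) ![β₁, β₂, β₃] := by
    have : (b ∘ fun i : Fin 3 => Fin.castLE h3 i) = ![β₁, β₂, β₃] := by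
      funext i; fin_cases i <;> rfl
    rwa [this] at hLI0
  -- All seven combinations are nonzero.
  have hcombo : ∀ c : Fin 3 → ZMod 2, c 0 • β₁ + c 1 • β₂ + c 2 • β₃ = 0 → ∀ i, c i = 0 := by
    intro c hc
    exact Fintype.linearIndependent_iff.mp hLI c
      (by simpa [Fin.sum_univ_three] using hc)
  have hA0 : β₁ * β₂ * β₃ * (β₁ + β₂) * (β₁ + β₃) * (β₂ + β₃) * (β₁ + β₂ + β₃) ≠ 0 := by
    have h1 : β₁ ≠ 0 := fun h => by
      simpa using hcombo ![1,0,0] (by simp [h]) 0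
    have h2 : β₂ ≠ 0 := fun h => by
      simpa using hcombo ![0,1,0] (by simp [h]) 1
    have h3' : β₃ ≠ 0 := fun h => by
      simpa using hcombo ![0,0,1] (by simp [h]) 2
    have h12 : β₁ + β₂ ≠ 0 := fun h => by
      simpa using hcombo ![1,1,0] (by simpa using h) 0
    have h13 : β₁ + β₃ ≠ 0 := fun h => by
      simpa using hcombo ![1,0,1] (by simpa using h) 0
    have h23 : β₂ + β₃ ≠ 0 := fun h => by
      simpa using hcombo ![0,1,1] (by simpa [add_assoc] using h) 1
    have h123 : β₁ + β₂ + β₃ ≠ 0 := fun h => by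
      simpa using hcombo ![1,1,1] (by simpa [add_assoc] using h) 0
    exact mul_ne_zero (mul_ne_zero (mul_ne_zero (mul_ne_zero (mul_ne_zero
      (mul_ne_zero h1 h2) h3') h12) h13) h23) h123
  -- Step 3: case split on whether `A` is a cube.
  set A := β₁ * β₂ * β₃ * (β₁ + β₂) * (β₁ + β₃) * (β₂ + β₃) * (β₁ + β₂ + β₃) with hAdef
  by_cases hc : ∃ s : GaloisField 2 m, s ^ 3 = A
  · -- scale by the non-cube `lam`
    obtain ⟨s, hs⟩ := hc
    have hs0 : s ≠ 0 := fun h => hA0 (by rw [← hs, h]; ring)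
    refine ⟨lam * β₁, lam * β₂, lam * β₃, ?_, ?_⟩
    · -- linear independence is preserved by multiplication by a nonzero scalar
      have hf : LinearMap.ker (LinearMap.mulLeft (ZMod 2) lam) = ⊥ := by
        rw [LinearMap.ker_eq_bot]
        intro x y hxy
        exact mul_left_cancel₀ hlam0 hxy
      have := hLI.map' _ hf
      have heq : (LinearMap.mulLeft (ZMod 2) lam ∘ ![β₁, β₂, β₃]) =
          ![lam * β₁, lam * β₂, lam * β₃] := by
        funext i; fin_cases i <;> rfl
      rwa [heq] at this
    · rintro ⟨t, ht⟩
      have ht' : t ^ 3 = lam ^ 7 * A := by rw [ht, hAdef]; ring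
      apply hlam (t * (lam ^ 2 * s)⁻¹)
      have hlas : lam ^ 2 * s ≠ 0 := mul_ne_zero (pow_ne_zero _ hlam0) hs0
      field_simp
      linear_combination ht' - lam ^ 7 * hs
  · exact ⟨β₁, β₂, β₃, hLI, hc⟩
end

section
/- Let m ≥ 6 be an even integer and let q = 2^m. Then there exists x ∈ F_q such that the element x·(1 + x)·(1 + x + x²) is not a cube in F_q. -/
/-!
In characteristic 2, `x (1 + x) (1 + x + x²) = x⁴ + x`, and `x ↦ x⁴ + x` is `𝔽₂`-linear with
kernel of size at most 4, so its image `V` has dimension at least `m - 2 > m / 2` once `m > 4`.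
If every element of `V` were a cube, then for any `u ≠ 0` the subspaces `V` and `u V` would meet
outside `0`, making `u` a quotient of two nonzero cubes. But for even `m` we have `3 ∣ 2^m - 1`,
so `𝔽_q^×` contains non-cubes.
-/

open Module Polynomial

theorem exists_forall_pow_ne_of_prime_dvd_natCard {G : Type*} [Group G] [Finite G] {p : ℕ}
    [Fact p.Prime] (hp : p ∣ Nat.card G) : ∃ g : G, ∀ h : G, h ^ p ≠ g := by
  obtain ⟨ζ, hζ⟩ := exists_prime_orderOf_dvd_card' p hp
  have hnotinj : ¬ Function.Injective (fun h : G => h ^ p) := fun hinj => by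
    have hζ1 : ζ = 1 := hinj (by simp only [one_pow, ← hζ, pow_orderOf_eq_one])
    rw [hζ1, orderOf_one] at hζ
    exact (Fact.out : p.Prime).one_lt.ne hζ
  have hnotsurj : ¬ Function.Surjective (fun h : G => h ^ p) :=
    mt Finite.injective_iff_surjective.mpr hnotinj
  simpa [Function.Surjective] using hnotsurj

theorem exists_ne_zero_forall_pow_ne {F : Type*} [Field F] [Finite F] {p : ℕ} [Fact p.Prime]
    (hp : p ∣ Nat.card F - 1) : ∃ u : F, u ≠ 0 ∧ ∀ t : F, t ^ p ≠ u := by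
  obtain ⟨u, hu⟩ :=
    exists_forall_pow_ne_of_prime_dvd_natCard (G := Fˣ) (p := p) (by rwa [Nat.card_units])
  refine ⟨u, u.ne_zero, fun t ht => ?_⟩
  have ht0 : t ≠ 0 := by
    rintro rfl
    exact u.ne_zero (by simp [← ht, (Fact.out : p.Prime).ne_zero])
  exact hu (Units.mk0 t ht0) (Units.ext (by simpa using ht))

theorem three_dvd_two_pow_sub_one {m : ℕ} (hm : Even m) : 3 ∣ 2 ^ m - 1 := by
  obtain ⟨k, rfl⟩ := hm
  simpa [← two_mul, pow_mul] using Nat.sub_dvd_pow_sub_pow 4 1 k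

theorem natCard_setOf_pow_eq_self_le {F : Type*} [Field F] {n : ℕ} (hn : 1 < n) :
    Nat.card {x : F | x ^ n = x} ≤ n := by
  classical
  have hne := FiniteField.X_pow_card_sub_X_ne_zero F hn
  have hsub : {x : F | x ^ n = x} ⊆ (X ^ n - X : F[X]).roots.toFinset := fun x hx => by
    simpa [hne, sub_eq_zero] using hx
  calc Nat.card {x : F | x ^ n = x} ≤ Nat.card ((X ^ n - X : F[X]).roots.toFinset : Set F) :=
        Nat.card_mono (Finset.finite_toSet _) hsub
    _ ≤ (X ^ n - X : F[X]).natDegree := by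
        rw [Nat.card_coe_set_eq, Set.ncard_coe_finset]
        exact card_le_degree_of_subset_roots fun x hx => Multiset.mem_toFinset.mp hx
    _ = n := FiniteField.X_pow_card_sub_X_natDegree_eq F hn

section FrobeniusSubSelf

variable {F : Type*} [Field F] (p : ℕ) [Fact p.Prime] [CharP F p] [Module (ZMod p) F]

def frobeniusSubSelf (k : ℕ) : F →ₗ[ZMod p] F :=
  ((iterateFrobenius F p k).toAddMonoidHom - AddMonoidHom.id F).toZModLinearMap p

theorem frobeniusSubSelf_apply (k : ℕ) (x : F) : frobeniusSubSelf p k x = x ^ p ^ k - x :=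
  congrArg (· - x) (iterateFrobenius_def p k x)

variable [Finite F] {k : ℕ}

theorem finrank_ker_frobeniusSubSelf_le (hk : 0 < k) :
    finrank (ZMod p) (LinearMap.ker (frobeniusSubSelf (F := F) p k)) ≤ k := by
  have hp := (Fact.out : p.Prime).one_lt
  have hcard : Nat.card (LinearMap.ker (frobeniusSubSelf (F := F) p k)) ≤ p ^ k := by
    convert natCard_setOf_pow_eq_self_le (F := F) (Nat.one_lt_pow hk.ne' hp) using 3
    simp [frobeniusSubSelf_apply, sub_eq_zero]
  rw [Module.natCard_eq_pow_finrank (K := ZMod p), Nat.card_zmod] at hcard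
  exact (Nat.pow_le_pow_iff_right hp).mp hcard

theorem finrank_sub_le_finrank_range_frobeniusSubSelf (hk : 0 < k) :
    finrank (ZMod p) F - k ≤ finrank (ZMod p) (LinearMap.range (frobeniusSubSelf (F := F) p k)) := by
  have hsum := (frobeniusSubSelf (F := F) p k).finrank_range_add_finrank_ker
  have hker := finrank_ker_frobeniusSubSelf_le (F := F) p hk
  omega

end FrobeniusSubSelf

section HalfDimensional

variable {K F : Type*} [Field K] [Field F] [Algebra K F] [FiniteDimensional K F]
  {V : Submodule K F}

theorem Submodule.exists_ne_zero_mul_mem_of_finrank_lt (hV : finrank K F < 2 * finrank K V)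
    {u : F} (hu : u ≠ 0) : ∃ v ∈ V, v ≠ 0 ∧ u * v ∈ V := by
  set W := V.map (LinearMap.mulLeft K u)
  have hW : finrank K W = finrank K V := (LinearEquiv.finrank_eq
    (Submodule.equivMapOfInjective _ (fun a b h => mul_left_cancel₀ hu h) V)).symm
  have hinf : V ⊓ W ≠ ⊥ := by
    intro h
    have hsum := Submodule.finrank_sup_add_finrank_inf_eq V W
    have hsup := Submodule.finrank_le (V ⊔ W)
    rw [h, finrank_bot] at hsum
    omega
  obtain ⟨w, ⟨hwV, v, hv, rfl⟩, hw⟩ := Submodule.exists_mem_ne_zero_of_ne_bot hinf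
  exact ⟨v, hv, by rintro rfl; simp at hw, hwV⟩

theorem Submodule.exists_pow_eq_of_finrank_lt (hV : finrank K F < 2 * finrank K V) {n : ℕ}
    (hpow : ∀ v ∈ V, ∃ t, t ^ n = v) {u : F} (hu : u ≠ 0) : ∃ t, t ^ n = u := by
  obtain ⟨v, hv, hv0, huv⟩ := V.exists_ne_zero_mul_mem_of_finrank_lt hV hu
  obtain ⟨s, rfl⟩ := hpow v hv
  obtain ⟨t, ht⟩ := hpow _ huv
  exact ⟨t / s, by rw [div_pow, ht, mul_div_cancel_right₀ _ hv0]⟩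

end HalfDimensional

theorem CharTwo.mul_one_add_mul_one_add_add_sq {R : Type*} [CommRing R] [CharP R 2] (x : R) :
    x * (1 + x) * (1 + x + x ^ 2) = x ^ 4 - x := by
  rw [CharTwo.sub_eq_add]
  linear_combination (x ^ 2 + x ^ 3) * CharTwo.two_eq_zero (R := R)

/-- For every even `m ≥ 6` there exists `x ∈ F_q`, `q = 2^m`, such that
`x·(1 + x)·(1 + x + x²)` is not a cube in `F_q`. -/
theorem exists_not_cube (m : ℕ) (hm : 6 ≤ m) (hme : Even m) :
    ∃ x : GaloisField 2 m,
      ¬ ∃ t : GaloisField 2 m, t ^ 3 = x * (1 + x) * (1 + x + x ^ 2) := by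
  have hm0 : m ≠ 0 := by omega
  obtain ⟨u, hu0, hu⟩ := exists_ne_zero_forall_pow_ne (F := GaloisField 2 m) (p := 3)
    (by rw [GaloisField.card 2 m hm0]; exact three_dvd_two_pow_sub_one hme)
  by_contra! hcubes
  set V := LinearMap.range (frobeniusSubSelf (F := GaloisField 2 m) 2 2)
  have hV : finrank (ZMod 2) (GaloisField 2 m) < 2 * finrank (ZMod 2) V := by
    have hrange : finrank (ZMod 2) (GaloisField 2 m) - 2 ≤ finrank (ZMod 2) V :=
      finrank_sub_le_finrank_range_frobeniusSubSelf 2 two_pos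
    rw [GaloisField.finrank 2 hm0] at hrange ⊢
    omega
  have hpow : ∀ v ∈ V, ∃ t, t ^ 3 = v := by
    rintro _ ⟨x, rfl⟩
    simpa [frobeniusSubSelf_apply, CharTwo.mul_one_add_mul_one_add_add_sq] using hcubes x
  obtain ⟨t, ht⟩ := V.exists_pow_eq_of_finrank_lt hV hpow hu0
  exact hu t ht
end

section
/- Uniqueness of the binary [6,3,3] code: Let C and C' be F_2-linear subspaces of F_2^6, each of dimension 3, such that every nonzero vector of C and every nonzero vector of C' has Hamming weight at least 3. Then C and C' are permutation equivalent: there exists a permutation σ of the 6 coordinate positions such that applying σ to the coordinates of the vectors of C yields exactly the code C'. -/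
/-!
Let `ε i ∈ C*` be the `i`-th coordinate functional of a `[6,3,3]` code `C`. The Plotkin identity
`2 ∑_{v ∈ C} wt v = |C| · #supp C` together with the weight bound shows that the `ε i` are
nonzero (`2·3·7 > 8·5`) and pairwise distinct (if `ε i = ε j`, shortening `C` at `i` leaves
4 codewords supported on 4 coordinates, and `2·3·3 > 4·4`). So they are six of the seven nonzero
vectors of the 3-dimensional space `C*`. A linear isomorphism `C'* ≃ C*` matching the missing
vectors matches the coordinate functionals up to a permutation `σ`, and its transpose `C ≃ C'`
is the coordinate permutation by `σ`.
-/

open Finset Module Function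

section Plotkin

variable {ι : Type*} [Fintype ι] {S : Finset (ι → ZMod 2)}

def coordSupport (S : Finset (ι → ZMod 2)) : Finset ι := {i | ∃ u ∈ S, u i ≠ 0}

omit [Fintype ι] in
/-- Translating by a codeword `u` with `u i ≠ 0` swaps the two halves. -/
theorem card_filter_coord_eq_zero (hS : ∀ x ∈ S, ∀ y ∈ S, x + y ∈ S) {u : ι → ZMod 2}
    (hu : u ∈ S) {i : ι} (hui : u i ≠ 0) : #{v ∈ S | v i = 0} = #{v ∈ S | v i ≠ 0} := by
  have hflip : ∀ a b : ZMod 2, b ≠ 0 → (a + b = 0 ↔ a ≠ 0) := by decide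
  have hinv : ∀ v : ι → ZMod 2, v + u + u = v := fun v => by
    rw [add_assoc, ZModModule.add_self, add_zero]
  refine card_nbij' (· + u) (· + u) ?_ ?_ (fun v _ => hinv v) (fun v _ => hinv v)
  · intro v hv
    simp only [coe_filter, Set.mem_ofPred_eq, Pi.add_apply] at hv ⊢
    exact ⟨hS v hv.1 u hu, by rw [Ne, hflip _ _ hui, not_not, hv.2]⟩
  · intro v hv
    simp only [coe_filter, Set.mem_ofPred_eq, Pi.add_apply] at hv ⊢
    exact ⟨hS v hv.1 u hu, (hflip _ _ hui).2 hv.2⟩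

theorem two_mul_sum_hammingNorm (hS : ∀ x ∈ S, ∀ y ∈ S, x + y ∈ S) :
    2 * ∑ v ∈ S, hammingNorm v = #S * #(coordSupport S) := by
  have hcol : ∀ i ∈ coordSupport S, 2 * #{v ∈ S | v i ≠ 0} = #S := by
    intro i hi
    obtain ⟨u, hu, hui⟩ := (mem_filter.1 hi).2
    rw [← card_filter_add_card_filter_not (s := S) (fun v => v i ≠ 0)]
    simp only [not_not, card_filter_coord_eq_zero hS hu hui]
    ring
  have hzero : ∀ i ∉ coordSupport S, #{v ∈ S | v i ≠ 0} = 0 := by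
    intro i hi
    simp only [coordSupport, mem_filter, mem_univ, true_and, not_exists, not_and, not_not] at hi
    simpa [filter_eq_empty_iff] using hi
  calc 2 * ∑ v ∈ S, hammingNorm v = ∑ i, 2 * #{v ∈ S | v i ≠ 0} := by
        simp only [hammingNorm, card_filter, mul_sum]
        rw [sum_comm]
    _ = ∑ i ∈ coordSupport S, 2 * #{v ∈ S | v i ≠ 0} :=
        (sum_subset (subset_univ _) fun i _ hi => by rw [hzero i hi, mul_zero]).symm
    _ = #S * #(coordSupport S) := by
        rw [sum_congr rfl hcol, sum_const, smul_eq_mul, mul_comm]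

theorem plotkin_bound (hS : ∀ x ∈ S, ∀ y ∈ S, x + y ∈ S) {d : ℕ}
    (hd : ∀ v ∈ S, v ≠ 0 → d ≤ hammingNorm v) :
    2 * (d * (#S - 1)) ≤ #S * #(coordSupport S) := by
  rw [← two_mul_sum_hammingNorm hS]
  gcongr
  calc d * (#S - 1) ≤ d * #(S.erase 0) := Nat.mul_le_mul_left d (pred_card_le_card_erase)
    _ ≤ ∑ v ∈ S.erase 0, hammingNorm v := by
        rw [mul_comm, ← smul_eq_mul]
        exact card_nsmul_le_sum _ _ _ fun v hv => hd v (mem_of_mem_erase hv) (ne_of_mem_erase hv)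
    _ ≤ ∑ v ∈ S, hammingNorm v := sum_le_sum_of_subset (erase_subset _ _)

end Plotkin

section BinaryCode

variable {ι : Type*} [Fintype ι] {C : Submodule (ZMod 2) (ι → ZMod 2)}

noncomputable def codewords (C : Submodule (ZMod 2) (ι → ZMod 2)) : Finset (ι → ZMod 2) :=
  (C : Set (ι → ZMod 2)).toFinite.toFinset

@[simp]
theorem mem_codewords {v : ι → ZMod 2} : v ∈ codewords C ↔ v ∈ C :=
  Set.Finite.mem_toFinset _

theorem add_mem_codewords : ∀ x ∈ codewords C, ∀ y ∈ codewords C, x + y ∈ codewords C := by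
  simp only [mem_codewords]
  exact fun x hx y hy => C.add_mem hx hy

theorem card_codewords : #(codewords C) = 2 ^ finrank (ZMod 2) C := by
  rw [codewords, ← Set.ncard_eq_toFinset_card, ← Nat.card_coe_set_eq, SetLike.coe_sort_coe,
    natCard_eq_pow_finrank (K := ZMod 2), Nat.card_zmod]

end BinaryCode

section Duality

variable {K ι : Type*} [Field K]

def coordFunctional (C : Submodule K (ι → K)) (i : ι) : Dual K C :=
  (LinearMap.proj i).domRestrict C

@[simp]
theorem coordFunctional_apply (C : Submodule K (ι → K)) (i : ι) (x : C) :
    coordFunctional C i x = (x : ι → K) i :=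
  rfl

/-- The transpose of `φ` is a linear equivalence `C ≃ₗ C'` acting on codewords as the
coordinate permutation `σ`. -/
theorem image_permute_eq_of_dual [Finite ι] {C C' : Submodule K (ι → K)}
    (φ : Dual K C' ≃ₗ[K] Dual K C) (σ : Equiv.Perm ι)
    (hφ : ∀ i, φ (coordFunctional C' i) = coordFunctional C (σ i)) :
    (fun v : ι → K => fun i => v (σ i)) '' C = C' := by
  let ψ : C ≃ₗ[K] C' := (evalEquiv K C).trans (φ.dualMap.trans (evalEquiv K C').symm)
  have hψ : ∀ x : C, (ψ x : ι → K) = fun i => (x : ι → K) (σ i) := fun x => funext fun i => by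
    rw [← coordFunctional_apply C' i, ← coordFunctional_apply C (σ i), ← hφ]
    simp [ψ]
  ext v
  constructor
  · rintro ⟨x, hx, rfl⟩
    simpa only [hψ, SetLike.mem_coe] using (ψ ⟨x, hx⟩).2
  · intro hv
    exact ⟨_, (ψ.symm ⟨v, hv⟩).2, (hψ _).symm.trans (by rw [ψ.apply_symm_apply])⟩

end Duality

theorem exists_perm_apply_eq_of_mem_range {ι β : Type*} [Finite ι] {g ε : ι → β}
    (hg : Injective g) (h : ∀ i, g i ∈ Set.range ε) : ∃ σ : Equiv.Perm ι, ∀ i, g i = ε (σ i) := by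
  choose σ hσ using h
  have hσinj : Injective σ := fun i j hij => hg (by rw [← hσ i, ← hσ j, hij])
  exact ⟨Equiv.ofBijective σ (Finite.injective_iff_bijective.1 hσinj), fun i => (hσ i).symm⟩

theorem exists_compl_insert_range_eq_singleton {ι α : Type*} [Finite α] {ε : ι → α}
    (hε : Injective ε) {a : α} (ha : a ∉ Set.range ε) (hcard : Nat.card α = Nat.card ι + 2) :
    ∃ m, (insert a (Set.range ε))ᶜ = {m} := by
  have : Finite ι := Finite.of_injective ε hε
  rw [← Set.ncard_eq_one]
  apply Set.ncard_compl_of_ncard_eq_add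
  rw [Set.ncard_insert_of_notMem ha, Set.ncard_range_of_injective hε, hcard]
  omega

section NonzeroVectors

variable {K V W : Type*} [Field K] [AddCommGroup V] [Module K V] [AddCommGroup W] [Module K W]
  [FiniteDimensional K V] [FiniteDimensional K W]

theorem exists_linearEquiv_apply_eq (h : finrank K V = finrank K W) {v : V} {w : W}
    (hv : v ≠ 0) (hw : w ≠ 0) : ∃ φ : V ≃ₗ[K] W, φ v = w := by
  let e := LinearEquiv.ofFinrankEq V W h
  have hev : e v ≠ 0 := e.map_ne_zero_iff.2 hv
  obtain ⟨g, hg⟩ := Submodule.exists_linearEquiv_restrict_eq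
    ((LinearEquiv.coord K W (e v) hev).trans
      (LinearEquiv.toSpanNonzeroSingleton K W w hw))
  refine ⟨e.trans g, ?_⟩
  have := hg ⟨e v, Submodule.mem_span_singleton_self _⟩
  simp only [LinearEquiv.trans_apply, LinearEquiv.coord_self,
    LinearEquiv.toSpanNonzeroSingleton_one] at this
  exact this.symm

/-- A linear isomorphism taking the nonzero vector missed by `ε` to the one missed by `ε'`
maps the two families onto each other. -/
theorem exists_linearEquiv_perm_of_card_eq_add_two [Finite K] {ι : Type*} {ε : ι → V}
    {ε' : ι → W} (hε : Injective ε) (hε' : Injective ε') (h0 : ∀ i, ε i ≠ 0)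
    (h0' : ∀ i, ε' i ≠ 0) (hVW : finrank K V = finrank K W)
    (hV : Nat.card V = Nat.card ι + 2) :
    ∃ (φ : V ≃ₗ[K] W) (σ : Equiv.Perm ι), ∀ i, φ (ε i) = ε' (σ i) := by
  have hW : Nat.card W = Nat.card ι + 2 := by
    rw [← hV, natCard_eq_pow_finrank (K := K), natCard_eq_pow_finrank (K := K) (V := V), hVW]
  have : Finite V := Module.finite_of_finite K
  have : Finite W := Module.finite_of_finite K
  obtain ⟨m, hm⟩ := exists_compl_insert_range_eq_singleton hε (a := 0)
    (fun ⟨i, hi⟩ => h0 i hi) hV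
  obtain ⟨m', hm'⟩ := exists_compl_insert_range_eq_singleton hε' (a := 0)
    (fun ⟨i, hi⟩ => h0' i hi) hW
  replace hm := compl_eq_comm.1 hm
  replace hm' := compl_eq_comm.1 hm'
  have hm0 : m ≠ 0 := (Set.mem_compl_singleton_iff.1 (hm ▸ Set.mem_insert 0 _)).symm
  have hm0' : m' ≠ 0 := (Set.mem_compl_singleton_iff.1 (hm' ▸ Set.mem_insert 0 _)).symm
  have : Finite ι := Finite.of_injective ε hε
  obtain ⟨φ, hφ⟩ := exists_linearEquiv_apply_eq hVW hm0 hm0'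
  refine ⟨φ, exists_perm_apply_eq_of_mem_range (φ.injective.comp hε) fun i => ?_⟩
  have hεi : ε i ≠ m :=
    Set.mem_compl_singleton_iff.1 (hm ▸ Set.mem_insert_of_mem 0 (Set.mem_range_self i))
  have : φ (ε i) ∈ insert 0 (Set.range ε') := by
    rw [← hm', Set.mem_compl_singleton_iff, ← hφ, φ.injective.ne_iff]
    exact hεi
  exact this.resolve_left (φ.map_ne_zero_iff.2 (h0 i))

end NonzeroVectors

def IsBinary633 (C : Submodule (ZMod 2) (Fin 6 → ZMod 2)) : Prop :=
  finrank (ZMod 2) C = 3 ∧ ∀ v ∈ C, v ≠ 0 → 3 ≤ hammingNorm v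

namespace IsBinary633

variable {C : Submodule (ZMod 2) (Fin 6 → ZMod 2)} (hC : IsBinary633 C)
include hC

theorem card_codewords : #(codewords C) = 8 := by
  rw [_root_.card_codewords, hC.1]; rfl

theorem coordSupport_eq_univ : coordSupport (codewords C) = univ := by
  have h := plotkin_bound add_mem_codewords fun v hv => hC.2 v (mem_codewords.1 hv)
  rw [hC.card_codewords] at h
  exact eq_univ_of_card _ (le_antisymm (card_le_univ _) (by rw [Fintype.card_fin]; omega))

theorem exists_coord_ne_zero (i : Fin 6) : ∃ u ∈ C, u i ≠ 0 := by
  obtain ⟨u, hu, hui⟩ := (mem_filter.1 (hC.coordSupport_eq_univ ▸ mem_univ i)).2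
  exact ⟨u, mem_codewords.1 hu, hui⟩

theorem exists_coord_ne {i j : Fin 6} (hij : i ≠ j) : ∃ v ∈ C, v i ≠ v j := by
  by_contra! hcol
  set S := {v ∈ codewords C | v i = 0} with hS
  have hclosed : ∀ x ∈ S, ∀ y ∈ S, x + y ∈ S := by
    simp only [hS, mem_filter]
    intro x hx y hy
    exact ⟨add_mem_codewords x hx.1 y hy.1, by simp [hx.2, hy.2]⟩
  have hcard : #S = 4 := by
    obtain ⟨u, hu, hui⟩ := hC.exists_coord_ne_zero i
    have hhalf := card_filter_coord_eq_zero add_mem_codewords (mem_codewords.2 hu) hui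
    have := card_filter_add_card_filter_not (s := codewords C) (fun v => v i ≠ 0)
    simp only [not_not, hC.card_codewords, hhalf] at this
    rw [hS, hhalf]
    omega
  have hsupp : coordSupport S ⊆ univ \ {i, j} := by
    intro k hk
    obtain ⟨u, hu, huk⟩ := (mem_filter.1 hk).2
    obtain ⟨hu, hui⟩ := mem_filter.1 hu
    have huj : u j = 0 := hcol u (mem_codewords.1 hu) ▸ hui
    simp only [mem_sdiff, mem_univ, mem_insert, mem_singleton, true_and]
    rintro (rfl | rfl) <;> contradiction
  have h := plotkin_bound hclosed fun v hv => hC.2 v (mem_codewords.1 (mem_filter.1 hv).1)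
  have h4 : #(univ \ {i, j}) = 4 := by
    rw [card_sdiff_of_subset (subset_univ _), card_pair hij]; rfl
  have := card_le_card hsupp
  rw [hcard] at h
  omega

theorem coordFunctional_ne_zero (i : Fin 6) : coordFunctional C i ≠ 0 := by
  obtain ⟨u, hu, hui⟩ := hC.exists_coord_ne_zero i
  intro h
  exact hui (LinearMap.congr_fun h ⟨u, hu⟩)

theorem coordFunctional_injective : Injective (coordFunctional C) := by
  intro i j h
  by_contra hij
  obtain ⟨u, hu, huij⟩ := hC.exists_coord_ne hij
  exact huij (LinearMap.congr_fun h ⟨u, hu⟩)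

end IsBinary633

/-- **Uniqueness of the binary `[6,3,3]` code.** If `C, C' ⊆ F_2^6` are 3-dimensional linear
codes all of whose nonzero vectors have Hamming weight at least 3, then `C` and `C'` are
permutation equivalent: some permutation `σ` of the 6 coordinates, acting by
`(σ·v) i = v (σ i)`, maps `C` onto `C'`. -/
theorem binary_633_code_unique (C C' : Submodule (ZMod 2) (Fin 6 → ZMod 2))
    (hC : Module.finrank (ZMod 2) ↥C = 3) (hC' : Module.finrank (ZMod 2) ↥C' = 3)
    (hwC : ∀ v ∈ C, v ≠ 0 → 3 ≤ (Finset.univ.filter fun i => v i ≠ 0).card)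
    (hwC' : ∀ v ∈ C', v ≠ 0 → 3 ≤ (Finset.univ.filter fun i => v i ≠ 0).card) :
    ∃ σ : Equiv.Perm (Fin 6),
      (fun v : Fin 6 → ZMod 2 => fun i => v (σ i)) '' ↑C = ↑C' := by
  have hcode : IsBinary633 C := ⟨hC, hwC⟩
  have hcode' : IsBinary633 C' := ⟨hC', hwC'⟩
  have hcard : Nat.card (Dual (ZMod 2) C') = Nat.card (Fin 6) + 2 := by
    rw [natCard_eq_pow_finrank (K := ZMod 2), Subspace.dual_finrank_eq, hC', Nat.card_zmod,
      Nat.card_fin]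
    rfl
  obtain ⟨φ, σ, hφ⟩ := exists_linearEquiv_perm_of_card_eq_add_two
    hcode'.coordFunctional_injective hcode.coordFunctional_injective
    hcode'.coordFunctional_ne_zero hcode.coordFunctional_ne_zero
    (by rw [Subspace.dual_finrank_eq, Subspace.dual_finrank_eq, hC, hC']) hcard
  exact ⟨σ, image_permute_eq_of_dual φ σ hφ⟩
end
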